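/- arXiv:1602.03399 — 6 statements merged into one kernel-verified Lean document; each statement's English description precedes it below -/
import Mathlib

section
/- For real numbers p, q > 1 with p + q > 3, the sum over n ≥ 1 of (ζ(p) − Σ_{i=1}^n 1/i^p)(ζ(q) − Σ_{j=1}^n 1/j^q) equals ζ(p, q−1) + ζ(q, p−1) + ζ(p+q−1) − ζ(p)ζ(q). -/
open scoped BigOperators

/-- Riemann zeta as a real series: `ζ(p) = Σ_{n≥1} 1/n^p`. -/
noncomputable def rzeta (p : ℝ) : ℝ := ∑' n : ℕ, 1 / (n + 1 : ℝ) ^ p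

/-- Double zeta value `ζ(a,b) = Σ_{m>n≥1} 1/(m^a n^b)`. -/
noncomputable def zeta2 (a b : ℝ) : ℝ :=
  ∑' q : {q : ℕ × ℕ // q.2 < q.1 ∧ 0 < q.2},
    1 / ((q.1.1 : ℝ) ^ a * (q.1.2 : ℝ) ^ b)

/-- Triple zeta value `ζ(a,b,c) = Σ_{l>m>n≥1} 1/(l^a m^b n^c)`. -/
noncomputable def zeta3 (a b c : ℝ) : ℝ :=
  ∑' t : {t : ℕ × ℕ × ℕ // t.2.1 < t.1 ∧ t.2.2 < t.2.1 ∧ 0 < t.2.2},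
    1 / ((t.1.1 : ℝ) ^ a * (t.1.2.1 : ℝ) ^ b * (t.1.2.2 : ℝ) ^ c)

/-- Tail of the zeta series: `ζ(p) − Σ_{i=1}^n 1/i^p`. -/
noncomputable def zetaTail (p : ℝ) (n : ℕ) : ℝ :=
  rzeta p - ∑ i ∈ Finset.range n, 1 / (i + 1 : ℝ) ^ p

/-- Polylogarithm `Li_p(z) = Σ_{j≥1} z^j / j^p`. -/
noncomputable def polyLog (p : ℝ) (z : ℝ) : ℝ :=
  ∑' j : ℕ, z ^ (j + 1) / (j + 1 : ℝ) ^ p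

/-!
Write `T_r(n) = Σ_{i>n} i^{-r}`. The product `T_p(n) T_q(n)` is the sum of `i^{-p} j^{-q}` over
`i, j > n`, so summing over all `n ≥ 0` counts each pair `(i, j)` exactly `min(i, j)` times:
`ζ(p) ζ(q) + Σ_{n≥1} T_p(n) T_q(n) = Σ_{i,j≥1} min(i, j) i^{-p} j^{-q}`.
Splitting the right side along `i = j`, `i > j`, `i < j` gives `ζ(p+q-1) + ζ(p,q-1) + ζ(q,p-1)`.
All rearrangements are done in `ℝ≥0∞`; the identity passes to `ℝ` because
`min(i, j) ≤ i^α j^β` with `α + β = 1` makes the right side finite when `p + q > 3`.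
-/

open scoped ENNReal

theorem tsum_nat_add_eq_tsum_ite {M : Type*} [AddCommMonoid M] [TopologicalSpace M]
    (f : ℕ → M) (n : ℕ) :
    ∑' i, f (i + n) = ∑' i, if n ≤ i then f i else 0 := by
  refine Eq.trans (tsum_congr fun i => ?_) ((add_left_injective n).tsum_eq fun i hi => ?_)
  · simp
  · exact ⟨i - n, Nat.sub_add_cancel (by by_contra h; simp [h] at hi)⟩

namespace ENNReal

theorem tsum_mul_tsum {α β : Type*} (f : α → ℝ≥0∞) (g : β → ℝ≥0∞) :
    (∑' a, f a) * ∑' b, g b = ∑' x : α × β, f x.1 * g x.2 := by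
  rw [ENNReal.tsum_prod (f := fun a b => f a * g b), ← ENNReal.tsum_mul_right]
  exact tsum_congr fun a => ENNReal.tsum_mul_left.symm

theorem tsum_ite_le_eq_succ_mul (m : ℕ) (c : ℝ≥0∞) :
    ∑' n, (if n ≤ m then c else 0) = (m + 1) * c := by
  rw [tsum_eq_sum (s := Finset.range (m + 1)) fun n hn => if_neg (by simpa using hn)]
  rw [Finset.sum_ite_of_true fun n hn => Nat.lt_succ_iff.mp (Finset.mem_range.mp hn)]
  simp

theorem tsum_tsum_nat_add_mul_tsum_nat_add (f g : ℕ → ℝ≥0∞) :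
    ∑' n, (∑' i, f (i + n)) * (∑' j, g (j + n)) =
      ∑' x : ℕ × ℕ, ((min x.1 x.2 : ℕ) + 1) * (f x.1 * g x.2) := by
  calc ∑' n, (∑' i, f (i + n)) * (∑' j, g (j + n))
      = ∑' n, ∑' x : ℕ × ℕ, if n ≤ min x.1 x.2 then f x.1 * g x.2 else 0 := by
        refine tsum_congr fun n => ?_
        rw [tsum_nat_add_eq_tsum_ite, tsum_nat_add_eq_tsum_ite, tsum_mul_tsum]
        refine tsum_congr fun x => ?_
        by_cases h1 : n ≤ x.1 <;> by_cases h2 : n ≤ x.2 <;> simp [h1, h2]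
    _ = ∑' x : ℕ × ℕ, ((min x.1 x.2 : ℕ) + 1) * (f x.1 * g x.2) := by
        rw [ENNReal.tsum_comm]
        exact tsum_congr fun x => tsum_ite_le_eq_succ_mul _ _

theorem tsum_prod_eq_diag_add_lower_add_upper (F : ℕ × ℕ → ℝ≥0∞) :
    ∑' x, F x = ∑' k, F (k, k) + ∑' x : {x : ℕ × ℕ // x.2 < x.1}, F x
      + ∑' x : {x : ℕ × ℕ // x.2 < x.1}, F x.1.swap := by
  have hsplit : ∀ x, F x = {x : ℕ × ℕ | x.1 = x.2}.indicator F x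
      + {x : ℕ × ℕ | x.2 < x.1}.indicator F x + {x : ℕ × ℕ | x.1 < x.2}.indicator F x := by
    intro x
    rcases lt_trichotomy x.1 x.2 with h | h | h
    · simp [Set.indicator, h, h.ne, not_lt_of_gt h]
    · simp [Set.indicator, h]
    · simp [Set.indicator, h, h.ne', not_lt_of_gt h]
  have hdiag : ∑' x : {x : ℕ × ℕ | x.1 = x.2}, F x = ∑' k, F (k, k) :=
    (Equiv.tsum_eq ⟨fun k => ⟨(k, k), rfl⟩, fun x => x.1.1, fun _ => rfl,
      fun x => Subtype.ext (Prod.ext rfl x.2)⟩ (fun x : {x : ℕ × ℕ | x.1 = x.2} => F x)).symm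
  have hupper : ∑' x : {x : ℕ × ℕ | x.1 < x.2}, F x
      = ∑' x : {x : ℕ × ℕ // x.2 < x.1}, F x.1.swap :=
    (Equiv.tsum_eq ((Equiv.prodComm ℕ ℕ).subtypeEquiv fun _ => Iff.rfl)
      (fun x : {x : ℕ × ℕ | x.1 < x.2} => F x)).symm
  rw [tsum_congr hsplit, ENNReal.tsum_add, ENNReal.tsum_add, ← tsum_subtype, ← tsum_subtype,
    ← tsum_subtype, hdiag, hupper]
  rfl

end ENNReal

namespace DoubleZeta

/-- `(n + 1)⁻ʳ`, shifted so that `n = 0` is the first term of `ζ(r)`. -/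
noncomputable def powTerm (r : ℝ) (n : ℕ) : ℝ≥0∞ := ENNReal.ofReal (1 / ((n : ℝ) + 1) ^ r)

theorem powTerm_mul (r s : ℝ) (n : ℕ) : powTerm r n * powTerm s n = powTerm (r + s) n := by
  rw [powTerm, powTerm, powTerm, ← ENNReal.ofReal_mul (by positivity),
    Real.rpow_add (by positivity), one_div_mul_one_div]

theorem powTerm_sub (r s : ℝ) (n : ℕ) :
    powTerm (r - s) n = ENNReal.ofReal (((n : ℝ) + 1) ^ s) * powTerm r n := by
  rw [powTerm, powTerm, ← ENNReal.ofReal_mul (by positivity),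
    Real.rpow_sub (by positivity), one_div_div, mul_one_div]

theorem natCast_add_one_mul_powTerm (r : ℝ) (n : ℕ) :
    ((n : ℝ≥0∞) + 1) * powTerm r n = powTerm (r - 1) n := by
  rw [powTerm_sub, Real.rpow_one, ENNReal.ofReal_add (by positivity) zero_le_one]
  simp

theorem powTerm_ne_top (r : ℝ) (n : ℕ) : powTerm r n ≠ ⊤ := ENNReal.ofReal_ne_top

theorem toReal_powTerm (r : ℝ) (n : ℕ) : (powTerm r n).toReal = 1 / ((n : ℝ) + 1) ^ r :=
  ENNReal.toReal_ofReal (by positivity)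

theorem toReal_tsum_powTerm (r : ℝ) : (∑' n, powTerm r n).toReal = rzeta r := by
  rw [ENNReal.tsum_toReal_eq fun _ => powTerm_ne_top _ _]
  exact tsum_congr fun n => toReal_powTerm r n

theorem toReal_tsum_lower_powTerm (a b : ℝ) :
    (∑' x : {x : ℕ × ℕ // x.2 < x.1}, powTerm a x.1.1 * powTerm b x.1.2).toReal = zeta2 a b := by
  let e : {x : ℕ × ℕ // x.2 < x.1} ≃ {x : ℕ × ℕ // x.2 < x.1 ∧ 0 < x.2} :=
    { toFun x := ⟨(x.1.1 + 1, x.1.2 + 1), by simpa using x.2⟩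
      invFun x := ⟨(x.1.1 - 1, x.1.2 - 1), by omega⟩
      left_inv x := by ext <;> simp
      right_inv x := by ext <;> simp <;> omega }
  rw [ENNReal.tsum_toReal_eq fun _ => ENNReal.mul_ne_top (powTerm_ne_top _ _) (powTerm_ne_top _ _),
    zeta2, ← e.tsum_eq]
  refine tsum_congr fun x => ?_
  simp [e, toReal_powTerm, mul_comm]

theorem summable_one_div_add_one_rpow {r : ℝ} (hr : 1 < r) :
    Summable fun n : ℕ => 1 / ((n : ℝ) + 1) ^ r := by
  simpa using (summable_nat_add_iff 1).mpr (Real.summable_one_div_nat_rpow.mpr hr)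

theorem tsum_powTerm_ne_top {r : ℝ} (hr : 1 < r) : ∑' n, powTerm r n ≠ ⊤ := by
  unfold powTerm
  rw [← ENNReal.ofReal_tsum_of_nonneg (fun _ => by positivity)
    (summable_one_div_add_one_rpow hr)]
  exact ENNReal.ofReal_ne_top

theorem toReal_tsum_powTerm_nat_add {r : ℝ} (hr : 1 < r) (n : ℕ) :
    (∑' i, powTerm r (i + n)).toReal = zetaTail r n := by
  rw [ENNReal.tsum_toReal_eq fun _ => powTerm_ne_top _ _, zetaTail, rzeta,
    ← (summable_one_div_add_one_rpow hr).sum_add_tsum_nat_add n, add_sub_cancel_left]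
  simp only [toReal_powTerm, Nat.cast_add]

theorem tsum_powTerm_nat_add_ne_top {r : ℝ} (hr : 1 < r) (n : ℕ) :
    ∑' i, powTerm r (i + n) ≠ ⊤ :=
  ne_top_of_le_ne_top (tsum_powTerm_ne_top hr)
    (ENNReal.tsum_comp_le_tsum_of_injective (add_left_injective n) _)

theorem toReal_tsum_tail_mul_tail {p q : ℝ} (hp : 1 < p) (hq : 1 < q) :
    (∑' n, (∑' i, powTerm p (i + (n + 1))) * ∑' j, powTerm q (j + (n + 1))).toReal =
      ∑' n : ℕ, zetaTail p (n + 1) * zetaTail q (n + 1) := by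
  rw [ENNReal.tsum_toReal_eq fun n => ENNReal.mul_ne_top
    (tsum_powTerm_nat_add_ne_top hp _) (tsum_powTerm_nat_add_ne_top hq _)]
  simp only [ENNReal.toReal_mul, toReal_tsum_powTerm_nat_add hp, toReal_tsum_powTerm_nat_add hq]

theorem tsum_min_add_one_mul_powTerm (p q : ℝ) :
    ∑' x : ℕ × ℕ, ((min x.1 x.2 : ℕ) + 1 : ℝ≥0∞) * (powTerm p x.1 * powTerm q x.2) =
      ∑' k, powTerm (p + q - 1) k
        + ∑' x : {x : ℕ × ℕ // x.2 < x.1}, powTerm p x.1.1 * powTerm (q - 1) x.1.2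
        + ∑' x : {x : ℕ × ℕ // x.2 < x.1}, powTerm q x.1.1 * powTerm (p - 1) x.1.2 := by
  rw [ENNReal.tsum_prod_eq_diag_add_lower_add_upper]
  refine congrArg₂ (· + ·) (congrArg₂ (· + ·) (tsum_congr fun k => ?_) (tsum_congr fun x => ?_))
    (tsum_congr fun x => ?_)
  · rw [min_self, powTerm_mul, natCast_add_one_mul_powTerm]
  · rw [min_eq_right x.2.le, ← natCast_add_one_mul_powTerm]
    ring
  · rw [Prod.fst_swap, Prod.snd_swap, min_eq_left x.2.le, ← natCast_add_one_mul_powTerm]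
    ring

theorem natCast_min_add_one_mul_powTerm_le {α β : ℝ} (hα : 0 ≤ α) (hβ : 0 ≤ β)
    (hαβ : α + β = 1) (p q : ℝ) (i j : ℕ) :
    ((min i j : ℕ) + 1 : ℝ≥0∞) * (powTerm p i * powTerm q j) ≤
      powTerm (p - α) i * powTerm (q - β) j := by
  have hreal : ((min i j : ℕ) + 1 : ℝ) ≤ ((i : ℝ) + 1) ^ α * ((j : ℝ) + 1) ^ β := by
    calc ((min i j : ℕ) + 1 : ℝ)
        = ((min i j : ℕ) + 1 : ℝ) ^ α * ((min i j : ℕ) + 1 : ℝ) ^ β := by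
          rw [← Real.rpow_add (by positivity), hαβ, Real.rpow_one]
      _ ≤ ((i : ℝ) + 1) ^ α * ((j : ℝ) + 1) ^ β := by
          gcongr <;> exact_mod_cast (by omega)
  have hcast : ((min i j : ℕ) + 1 : ℝ≥0∞) = ENNReal.ofReal ((min i j : ℕ) + 1 : ℝ) := by
    rw [ENNReal.ofReal_add (by positivity) zero_le_one, ENNReal.ofReal_natCast, ENNReal.ofReal_one]
  rw [powTerm_sub, powTerm_sub, mul_mul_mul_comm, ← ENNReal.ofReal_mul (by positivity), hcast]
  gcongr

theorem tsum_min_add_one_mul_powTerm_ne_top {p q : ℝ} (hp : 1 < p) (hq : 1 < q)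
    (hpq : 3 < p + q) :
    ∑' x : ℕ × ℕ, ((min x.1 x.2 : ℕ) + 1 : ℝ≥0∞) * (powTerm p x.1 * powTerm q x.2) ≠ ⊤ := by
  -- split `1 = α + β` in the ratio `(p - 1) : (q - 1)`; both `p - α` and `q - β` exceed `1`
  have hden : 1 < p + q - 2 := by linarith
  have hsum : (p - 1) / (p + q - 2) + (q - 1) / (p + q - 2) = 1 := by
    field_simp
    ring
  have hp' : 1 < p - (p - 1) / (p + q - 2) := by
    linarith [div_lt_self (by linarith : 0 < p - 1) hden]
  have hq' : 1 < q - (q - 1) / (p + q - 2) := by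
    linarith [div_lt_self (by linarith : 0 < q - 1) hden]
  refine ne_top_of_le_ne_top ?_ (ENNReal.tsum_le_tsum fun x =>
    natCast_min_add_one_mul_powTerm_le (by bound) (by bound) hsum p q x.1 x.2)
  rw [← ENNReal.tsum_mul_tsum]
  exact ENNReal.mul_ne_top (tsum_powTerm_ne_top hp') (tsum_powTerm_ne_top hq')

end DoubleZeta

open DoubleZeta

theorem stmt0 (p q : ℝ) (hp : 1 < p) (hq : 1 < q) (hpq : 3 < p + q) :
    ∑' n : ℕ, zetaTail p (n + 1) * zetaTail q (n + 1) =
      zeta2 p (q - 1) + zeta2 q (p - 1) + rzeta (p + q - 1) - rzeta p * rzeta q := by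
  have hfin := tsum_min_add_one_mul_powTerm_ne_top hp hq hpq
  have key := ENNReal.tsum_tsum_nat_add_mul_tsum_nat_add (powTerm p) (powTerm q)
  -- the `n = 0` term of the left side is `ζ(p) ζ(q)`
  rw [tsum_eq_zero_add' ENNReal.summable] at key
  simp only [add_zero] at key
  rw [tsum_min_add_one_mul_powTerm] at key hfin
  obtain ⟨hZ, hL⟩ := ENNReal.add_ne_top.mp (by rwa [key])
  obtain ⟨⟨hD, hA⟩, hB⟩ : (_ ∧ _) ∧ _ := by simpa only [ENNReal.add_ne_top] using hfin
  have hreal := congrArg ENNReal.toReal key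
  rw [ENNReal.toReal_add hZ hL, ENNReal.toReal_mul, toReal_tsum_powTerm, toReal_tsum_powTerm,
    toReal_tsum_tail_mul_tail hp hq, ENNReal.toReal_add (ENNReal.add_ne_top.mpr ⟨hD, hA⟩) hB,
    ENNReal.toReal_add hD hA, toReal_tsum_powTerm, toReal_tsum_lower_powTerm,
    toReal_tsum_lower_powTerm] at hreal
  linarith
end

section
/- The sum over n ≥ 1 of (ζ(3) − Σ_{j=1}^n 1/j^3)(ζ(2) − Σ_{k=1}^n 1/k^2) equals 2ζ(4) − ζ(2)ζ(3). -/
open scoped BigOperators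

/-!
Work in `ℝ≥0∞`, where series may be rearranged freely. Writing the tail as
`T_p(n) = Σ_{m > n} m⁻ᵖ` and exchanging the order of summation, `Σ_{n ≥ 0} T₃(n) T₂(n)`
becomes `Σ_{j,k ≥ 1} min(j,k) j⁻³ k⁻²`; splitting into `j < k`, `j = k`, `j > k` gives
`ζ(2,2) + ζ(4) + ζ(3,1)`. The stuffle relation `ζ(2)² = 2ζ(2,2) + ζ(4)`, the shuffle relation
`ζ(2)² = 2ζ(2,2) + 4ζ(3,1)` (partial fractions) and `ζ(2)² = 5ζ(4)/2` then give
`ζ(2,2) = 3ζ(4)/4` and `ζ(3,1) = ζ(4)/4`.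
-/

namespace ZetaTailProduct

open Function
open scoped ENNReal NNReal

theorem tsum_ite_eq_tsum_comp {α β M : Type*} [AddCommMonoid M] [TopologicalSpace M]
    {e : β → α} (he : Injective e) (P : α → Prop) [DecidablePred P]
    (hP : ∀ a, P a ↔ a ∈ Set.range e) (g : α → M) :
    ∑' a, (if P a then g a else 0) = ∑' b, g (e b) := by
  refine (he.tsum_eq fun a ha => (hP a).1 ?_).symm.trans
    (tsum_congr fun b => if_pos ((hP _).2 ⟨b, rfl⟩))
  by_contra h
  exact ha (if_neg h)

theorem tsum_prod_eq_upper_add_diag_add_lower (g : ℕ → ℕ → ℝ≥0∞) :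
    ∑' x : ℕ × ℕ, g x.1 x.2 =
      ∑' q : ℕ × ℕ, g q.1 (q.1 + q.2 + 1) + ∑' n, g n n +
        ∑' q : ℕ × ℕ, g (q.1 + q.2 + 1) q.1 := by
  have hsplit : ∀ x : ℕ × ℕ, g x.1 x.2 = (if x.1 < x.2 then g x.1 x.2 else 0) +
      (if x.1 = x.2 then g x.1 x.2 else 0) + (if x.2 < x.1 then g x.1 x.2 else 0) := by
    intro x
    rcases lt_trichotomy x.1 x.2 with h | h | h
    · simp [h, h.ne, h.not_gt]
    · simp [h]
    · simp [h, h.ne', h.not_gt]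
  rw [tsum_congr hsplit, ENNReal.tsum_add, ENNReal.tsum_add,
    tsum_ite_eq_tsum_comp (e := fun q : ℕ × ℕ => (q.1, q.1 + q.2 + 1)) ?injU _ ?upper,
    tsum_ite_eq_tsum_comp (e := fun n : ℕ => (n, n)) ?injD _ ?diag,
    tsum_ite_eq_tsum_comp (e := fun q : ℕ × ℕ => (q.1 + q.2 + 1, q.1)) ?injL _ ?lower]
  case upper =>
    exact fun x => ⟨fun h => ⟨(x.1, x.2 - x.1 - 1), by ext <;> simp only; omega⟩,
      by rintro ⟨q, rfl⟩; simp only; omega⟩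
  case diag => exact fun x => ⟨fun h => ⟨x.1, by ext <;> simp [h]⟩, by rintro ⟨n, rfl⟩; rfl⟩
  case lower =>
    exact fun x => ⟨fun h => ⟨(x.2, x.1 - x.2 - 1), by ext <;> simp only; omega⟩,
      by rintro ⟨q, rfl⟩; simp only; omega⟩
  case injU => intro q q' h; simp only [Prod.mk.injEq] at h; ext <;> omega
  case injD => intro n n' h; exact (Prod.mk.inj h).1
  case injL => intro q q' h; simp only [Prod.mk.injEq] at h; ext <;> omega

theorem tsum_mul_tsum {α β : Type*} (f : α → ℝ≥0∞) (g : β → ℝ≥0∞) :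
    (∑' a, f a) * ∑' b, g b = ∑' x : α × β, f x.1 * g x.2 := by
  rw [ENNReal.tsum_prod (f := fun a b => f a * g b)]
  simp_rw [ENNReal.tsum_mul_left]
  rw [ENNReal.tsum_mul_right]

theorem tsum_ite_le_const (m : ℕ) (c : ℝ≥0∞) : ∑' n, (if n ≤ m then c else 0) = (m + 1) * c := by
  rw [tsum_eq_sum (s := Finset.range (m + 1)) fun n hn => by simp_all,
    Finset.sum_ite_of_true fun n hn => Nat.lt_succ_iff.1 (Finset.mem_range.1 hn)]
  simp

noncomputable def invPow (p m : ℕ) : ℝ≥0∞ := (((m : ℝ≥0) ^ p)⁻¹ : ℝ≥0)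

noncomputable def zetaE (p : ℕ) : ℝ≥0∞ := ∑' n, invPow p (n + 1)

noncomputable def zetaTailE (p n : ℕ) : ℝ≥0∞ := ∑' i, invPow p (i + n + 1)

/-- `Σ_{m > n ≥ 1} m⁻ᵃ n⁻ᵇ`, with `n = q.1 + 1` and `m = n + q.2 + 1`. -/
noncomputable def zeta2E (a b : ℕ) : ℝ≥0∞ :=
  ∑' q : ℕ × ℕ, invPow a (q.1 + q.2 + 2) * invPow b (q.1 + 1)

theorem invPow_ne_top (p m : ℕ) : invPow p m ≠ ⊤ := ENNReal.coe_ne_top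

theorem invPow_mul_invPow (p q m : ℕ) : invPow p m * invPow q m = invPow (p + q) m := by
  simp only [invPow, ← ENNReal.coe_mul, pow_add, mul_inv]

theorem succ_mul_invPow_succ (p m : ℕ) :
    ((m : ℝ≥0∞) + 1) * invPow (p + 1) (m + 1) = invPow p (m + 1) := by
  have h : ((m : ℝ≥0) + 1) * (((m : ℝ≥0) + 1) ^ (p + 1))⁻¹ = (((m : ℝ≥0) + 1) ^ p)⁻¹ := by
    rw [pow_succ, mul_inv, mul_left_comm, mul_inv_cancel₀ (by positivity), mul_one]
  simp only [invPow, Nat.cast_succ]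
  exact_mod_cast h

theorem zetaTailE_eq_tsum_ite (p n : ℕ) :
    zetaTailE p n = ∑' m, if n ≤ m then invPow p (m + 1) else 0 :=
  (tsum_ite_eq_tsum_comp (add_left_injective n) (n ≤ ·)
    (fun m => ⟨fun h => ⟨m - n, by simp only; omega⟩, by rintro ⟨i, rfl⟩; simp⟩)
    fun m => invPow p (m + 1)).symm

theorem zetaTailE_zero (p : ℕ) : zetaTailE p 0 = zetaE p := rfl

theorem zetaTailE_le_zetaE (p n : ℕ) : zetaTailE p n ≤ zetaE p := by
  rw [zetaTailE_eq_tsum_ite]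
  exact ENNReal.tsum_le_tsum fun m => by split_ifs <;> simp

theorem tsum_zetaTailE_mul_zetaTailE (p q : ℕ) :
    ∑' n, zetaTailE p n * zetaTailE q n =
      ∑' x : ℕ × ℕ,
        ((min x.1 x.2 : ℕ) + 1 : ℝ≥0∞) * (invPow p (x.1 + 1) * invPow q (x.2 + 1)) := by
  simp_rw [zetaTailE_eq_tsum_ite, tsum_mul_tsum, ite_mul, zero_mul, mul_ite, mul_zero, ← ite_and,
    ← le_min_iff]
  rw [ENNReal.tsum_comm]
  exact tsum_congr fun x => tsum_ite_le_const _ _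

theorem zetaE_mul_zetaE (p q : ℕ) :
    zetaE p * zetaE q = zeta2E q p + zetaE (p + q) + zeta2E p q := by
  rw [zetaE, zetaE, tsum_mul_tsum,
    tsum_prod_eq_upper_add_diag_add_lower fun j k => invPow p (j + 1) * invPow q (k + 1)]
  simp_rw [invPow_mul_invPow]
  congr 2
  exact tsum_congr fun x => mul_comm _ _

theorem tsum_zetaTailE_succ_mul_zetaTailE_succ (p q : ℕ) :
    ∑' n, zetaTailE (p + 1) n * zetaTailE (q + 1) n =
      zeta2E (q + 1) p + zetaE (p + q + 1) + zeta2E (p + 1) q := by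
  rw [tsum_zetaTailE_mul_zetaTailE, tsum_prod_eq_upper_add_diag_add_lower
    fun j k => ((min j k : ℕ) + 1 : ℝ≥0∞) * (invPow (p + 1) (j + 1) * invPow (q + 1) (k + 1))]
  refine congr_arg₂ (· + ·) (congr_arg₂ (· + ·) (tsum_congr fun x => ?upper)
    (tsum_congr fun n => ?diag)) (tsum_congr fun x => ?lower)
  case upper => rw [min_eq_left (by omega), ← mul_assoc, succ_mul_invPow_succ, mul_comm]
  case diag =>
    rw [min_self, invPow_mul_invPow, show p + 1 + (q + 1) = p + q + 1 + 1 by ring,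
      succ_mul_invPow_succ]
  case lower => rw [min_eq_right (by omega), mul_left_comm, succ_mul_invPow_succ]

-- The partial fractions behind the shuffle relation `ζ(2)² = 2ζ(2,2) + 4ζ(3,1)`.
theorem inv_sq_mul_inv_sq {K : Type*} [Semifield K] {M N : K} (hM : M ≠ 0) (hN : N ≠ 0)
    (hMN : M + N ≠ 0) :
    (M ^ 2)⁻¹ * (N ^ 2)⁻¹ = ((M + N) ^ 2)⁻¹ * (M ^ 2)⁻¹ + ((M + N) ^ 2)⁻¹ * (N ^ 2)⁻¹ +
      2 * (((M + N) ^ 3)⁻¹ * M⁻¹ + ((M + N) ^ 3)⁻¹ * N⁻¹) := by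
  field_simp
  ring

theorem invPow_two_mul_invPow_two (j k : ℕ) :
    invPow 2 (j + 1) * invPow 2 (k + 1) =
      invPow 2 (j + k + 2) * invPow 2 (j + 1) + invPow 2 (j + k + 2) * invPow 2 (k + 1) +
        2 * (invPow 3 (j + k + 2) * invPow 1 (j + 1) +
          invPow 3 (j + k + 2) * invPow 1 (k + 1)) := by
  have h := inv_sq_mul_inv_sq (M := (j : ℝ≥0) + 1) (N := (k : ℝ≥0) + 1) (by positivity)
    (by positivity) (by positivity)
  simp only [invPow, pow_one, Nat.cast_add, Nat.cast_one, Nat.cast_ofNat]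
  rw [show (j : ℝ≥0) + k + 2 = (j + 1) + (k + 1) by ring]
  exact_mod_cast h

theorem zeta2E_eq_tsum_swap (a b : ℕ) :
    zeta2E a b = ∑' x : ℕ × ℕ, invPow a (x.1 + x.2 + 2) * invPow b (x.2 + 1) := by
  rw [zeta2E, ← (Equiv.prodComm ℕ ℕ).tsum_eq]
  exact tsum_congr fun x => by simp [add_comm x.1 x.2]

theorem zetaE_two_mul_zetaE_two : zetaE 2 * zetaE 2 = 2 * zeta2E 2 2 + 4 * zeta2E 3 1 := by
  rw [zetaE, tsum_mul_tsum, tsum_congr fun x : ℕ × ℕ => invPow_two_mul_invPow_two x.1 x.2,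
    ENNReal.tsum_add, ENNReal.tsum_add, ENNReal.tsum_mul_left, ENNReal.tsum_add,
    ← zeta2E_eq_tsum_swap, ← zeta2E_eq_tsum_swap]
  rw [zeta2E, zeta2E]
  ring

theorem zetaE_ne_top {p : ℕ} (hp : 2 ≤ p) : zetaE p ≠ ⊤ := by
  have h : Summable fun n : ℕ => (((n : ℝ) + 1) ^ p)⁻¹ := by
    exact_mod_cast (summable_nat_add_iff 1).2 (Real.summable_nat_pow_inv.2 hp)
  exact ENNReal.tsum_coe_ne_top_iff_summable.2 (NNReal.summable_coe.1 (by push_cast; exact h))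

theorem zeta2E_two_two_ne_top : zeta2E 2 2 ≠ ⊤ :=
  ne_top_of_le_ne_top (ENNReal.mul_ne_top (zetaE_ne_top le_rfl) (zetaE_ne_top le_rfl))
    (zetaE_mul_zetaE 2 2 ▸ le_add_self)

theorem zeta2E_three_one_ne_top : zeta2E 3 1 ≠ ⊤ := by
  have h : 4 * zeta2E 3 1 ≠ ⊤ :=
    ne_top_of_le_ne_top (ENNReal.mul_ne_top (zetaE_ne_top le_rfl) (zetaE_ne_top le_rfl))
      (zetaE_two_mul_zetaE_two ▸ le_add_self)
  exact fun h' => h (by simp [h'])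

theorem toReal_invPow (p m : ℕ) : (invPow p m).toReal = 1 / (m : ℝ) ^ p := by
  simp [invPow]

theorem toReal_zetaE (p : ℕ) : (zetaE p).toReal = rzeta p := by
  rw [zetaE, ENNReal.tsum_toReal_eq fun _ => invPow_ne_top _ _, rzeta]
  exact tsum_congr fun n => by rw [toReal_invPow, Real.rpow_natCast, Nat.cast_succ]

theorem toReal_zetaTailE {p : ℕ} (hp : 2 ≤ p) (n : ℕ) : (zetaTailE p n).toReal = zetaTail p n := by
  have hs : Summable fun i : ℕ => 1 / ((i : ℝ) + 1) ^ (p : ℝ) := by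
    simp_rw [Real.rpow_natCast, one_div]
    exact_mod_cast (summable_nat_add_iff 1).2 (Real.summable_nat_pow_inv.2 hp)
  rw [zetaTailE, ENNReal.tsum_toReal_eq fun _ => invPow_ne_top _ _, zetaTail, rzeta,
    ← hs.sum_add_tsum_nat_add n, add_sub_cancel_left]
  exact tsum_congr fun i => by rw [toReal_invPow, Real.rpow_natCast]; push_cast; ring_nf

theorem rzeta_eq_of_hasSum {k : ℕ} (hk : k ≠ 0) {v : ℝ}
    (h : HasSum (fun n : ℕ => 1 / (n : ℝ) ^ k) v) : rzeta k = v := by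
  have h' := (hasSum_nat_add_iff' 1).2 h
  simp only [Finset.range_one, Finset.sum_singleton, Nat.cast_zero, zero_pow hk, div_zero,
    sub_zero, Nat.cast_add, Nat.cast_one] at h'
  rw [rzeta]
  simpa only [Real.rpow_natCast] using h'.tsum_eq

theorem rzeta_two : rzeta 2 = Real.pi ^ 2 / 6 := by
  exact_mod_cast rzeta_eq_of_hasSum two_ne_zero hasSum_zeta_two

theorem rzeta_four : rzeta 4 = Real.pi ^ 4 / 90 := by
  exact_mod_cast rzeta_eq_of_hasSum four_ne_zero hasSum_zeta_four

theorem rzeta_two_mul_rzeta_two_eq_stuffle :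
    rzeta 2 * rzeta 2 = 2 * (zeta2E 2 2).toReal + rzeta 4 := by
  have h4 := zetaE_ne_top (p := 4) (by norm_num)
  have h22 := zeta2E_two_two_ne_top
  have h := congrArg ENNReal.toReal (zetaE_mul_zetaE 2 2)
  simp (disch := finiteness) only [ENNReal.toReal_mul, ENNReal.toReal_add, toReal_zetaE] at h
  push_cast at h
  linarith

theorem rzeta_two_mul_rzeta_two_eq_shuffle :
    rzeta 2 * rzeta 2 = 2 * (zeta2E 2 2).toReal + 4 * (zeta2E 3 1).toReal := by
  have h22 := zeta2E_two_two_ne_top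
  have h31 := zeta2E_three_one_ne_top
  have h := congrArg ENNReal.toReal zetaE_two_mul_zetaE_two
  simp (disch := finiteness) only [ENNReal.toReal_mul, ENNReal.toReal_add, toReal_zetaE,
    ENNReal.toReal_ofNat] at h
  push_cast at h
  linarith

theorem tsum_zetaTail_three_mul_zetaTail_two_add :
    ∑' n : ℕ, zetaTail 3 (n + 1) * zetaTail 2 (n + 1) + rzeta 3 * rzeta 2 =
      (zeta2E 2 2).toReal + rzeta 4 + (zeta2E 3 1).toReal := by
  have hE := tsum_zetaTailE_succ_mul_zetaTailE_succ 2 1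
  simp only [Nat.reduceAdd] at hE
  rw [tsum_eq_zero_add' ENNReal.summable, zetaTailE_zero, zetaTailE_zero, add_comm] at hE
  have h2 := zetaE_ne_top (le_refl 2)
  have h3 := zetaE_ne_top (p := 3) (by norm_num)
  have h4 := zetaE_ne_top (p := 4) (by norm_num)
  have h22 := zeta2E_two_two_ne_top
  have h31 := zeta2E_three_one_ne_top
  have hT : ∑' n, zetaTailE 3 (n + 1) * zetaTailE 2 (n + 1) ≠ ⊤ :=
    ne_top_of_le_ne_top (by finiteness) (hE ▸ le_self_add)
  have hfin : ∀ n, zetaTailE 3 (n + 1) * zetaTailE 2 (n + 1) ≠ ⊤ := fun n =>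
    ENNReal.mul_ne_top (ne_top_of_le_ne_top h3 (zetaTailE_le_zetaE _ _))
      (ne_top_of_le_ne_top h2 (zetaTailE_le_zetaE _ _))
  have h := congrArg ENNReal.toReal hE
  simp (disch := finiteness) only [ENNReal.toReal_mul, ENNReal.toReal_add, toReal_zetaE,
    ENNReal.tsum_toReal_eq hfin, toReal_zetaTailE (p := 3) (by norm_num),
    toReal_zetaTailE (p := 2) le_rfl] at h
  push_cast at h
  linarith

end ZetaTailProduct

theorem stmt3 :
    ∑' n : ℕ, zetaTail 3 (n + 1) * zetaTail 2 (n + 1) =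
      2 * rzeta 4 - rzeta 2 * rzeta 3 := by
  open ZetaTailProduct in
  have hsq : rzeta 2 * rzeta 2 = Real.pi ^ 4 / 36 := by rw [rzeta_two]; ring
  linarith [tsum_zetaTail_three_mul_zetaTail_two_add, rzeta_two_mul_rzeta_two_eq_stuffle,
    rzeta_two_mul_rzeta_two_eq_shuffle, rzeta_four]
end

section
/- For an integer n ≥ 2, ζ(n,1) = (n/2)ζ(n+1) − (1/2)Σ_{j=2}^{n−1} ζ(j)ζ(n+1−j), where the sum is empty (equal to 0) if n = 2. -/
open scoped BigOperators

/-!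
Euler's formula is a consequence of two identities. The stuffle product
`ζ(a) ζ(b) = ζ(a,b) + ζ(b,a) + ζ(a+b)` comes from splitting the product series along `m > k`,
`m < k` and `m = k`. The sum theorem `∑_{a=2}^{N} ζ(a, N+1-a) = ζ(N+1)` comes from the partial
fraction identity
  `∑_{a=2}^{N} 1/(m^a k^(N+1-a)) = 1/(m (m-k) k^(N-1)) - 1/(m^N (m-k))`:
after `k ↦ m - k` the last family sums to `ζ(N,1)`, while summing the first one over `m > k`
telescopes to `H_k / k^N`, and `∑_k H_k / k^N = ζ(N,1) + ζ(N+1)`. Expanding each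
`ζ(j) ζ(n+1-j)` by the stuffle product, pairing `ζ(j, n+1-j)` with `ζ(n+1-j, j)` through
`j ↦ n+1-j`, and applying the sum theorem gives the formula.

Series over `ℕ` and `ℕ × ℕ` keep the index `0`: the terms there vanish because `1/0 = 0`.
-/

open Finset Filter Topology

lemma hasSum_rzeta {k : ℕ} (hk : 2 ≤ k) :
    HasSum (fun n : ℕ => 1 / (n : ℝ) ^ k) (rzeta k) := by
  have hs : Summable (fun n : ℕ => 1 / (n : ℝ) ^ k) :=
    Real.summable_one_div_nat_pow.mpr (by omega)
  have hshift : HasSum (fun n : ℕ => 1 / ((n + 1 : ℕ) : ℝ) ^ k) (rzeta k) := by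
    simpa [rzeta, Real.rpow_natCast] using ((summable_nat_add_iff 1).mpr hs).hasSum
  rw [← hasSum_nat_add_iff' 1]
  simpa [zero_pow (by omega : k ≠ 0)] using hshift

lemma hasSum_sub_succ_of_antitone {g : ℕ → ℝ} (hg : Antitone g)
    (hg0 : Tendsto g atTop (𝓝 0)) : HasSum (fun n => g n - g (n + 1)) (g 0) := by
  rw [hasSum_iff_tendsto_nat_of_nonneg (fun n => sub_nonneg.mpr (hg n.le_succ))]
  simp only [sum_range_sub']
  simpa using (tendsto_const_nhds (x := g 0)).sub hg0

lemma hasSum_sub_add_of_antitone {g : ℕ → ℝ} (hg : Antitone g)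
    (hg0 : Tendsto g atTop (𝓝 0)) (c : ℕ) :
    HasSum (fun n => g n - g (n + c)) (∑ i ∈ range c, g i) := by
  induction c with
  | zero => simp [hasSum_zero]
  | succ c ih =>
    have hstep := hasSum_sub_succ_of_antitone (g := fun n => g (n + c))
      (fun m n h => hg (by omega)) (hg0.comp (tendsto_add_atTop_nat c))
    simpa [sum_range_succ, add_right_comm _ 1 c, ← add_assoc] using ih.add hstep

lemma hasSum_div_mul_add_harmonic (c : ℕ) :
    HasSum (fun j : ℕ => (c : ℝ) / (((j : ℝ) + 1) * ((j : ℝ) + 1 + c))) (harmonic c) := by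
  have hanti : Antitone (fun n : ℕ => 1 / ((n : ℝ) + 1)) := fun m n h =>
    one_div_le_one_div_of_le (by positivity) (by gcongr)
  have h := hasSum_sub_add_of_antitone hanti tendsto_one_div_add_atTop_nhds_zero_nat c
  convert h using 1
  · funext j
    push_cast
    field_simp
    ring
  · simp [harmonic]

abbrev Zeta2Index : Type := {q : ℕ × ℕ // q.2 < q.1 ∧ 0 < q.2}

lemma rpow_three_halves_mul_le {x y : ℝ} (hy : 0 ≤ y) (hyx : y ≤ x) :
    x ^ (3 / 2 : ℝ) * y ^ (3 / 2 : ℝ) ≤ x ^ 2 * y := by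
  have hx : 0 ≤ x := hy.trans hyx
  have split : ∀ t : ℝ, 0 ≤ t → t ^ (3 / 2 : ℝ) = t * t ^ (1 / 2 : ℝ) := fun t ht => by
    rw [← Real.rpow_one_add' ht (by norm_num)]; norm_num
  calc x ^ (3 / 2 : ℝ) * y ^ (3 / 2 : ℝ) = x ^ (3 / 2 : ℝ) * y * y ^ (1 / 2 : ℝ) := by
        rw [split y hy]; ring
    _ ≤ x ^ (3 / 2 : ℝ) * y * x ^ (1 / 2 : ℝ) := by
        gcongr
    _ = x ^ 2 * y := by
        rw [mul_right_comm, ← Real.rpow_add' hx (by norm_num)]; norm_num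

lemma summable_zeta2 {a b : ℕ} (ha : 2 ≤ a) (hb : 1 ≤ b) :
    Summable (fun q : Zeta2Index => 1 / ((q.1.1 : ℝ) ^ a * (q.1.2 : ℝ) ^ b)) := by
  have h32 : Summable (fun n : ℕ => 1 / (n : ℝ) ^ (3 / 2 : ℝ)) :=
    Real.summable_one_div_nat_rpow.mpr (by norm_num)
  have hprod : Summable
      (fun p : ℕ × ℕ => 1 / ((p.1 : ℝ) ^ (3 / 2 : ℝ) * (p.2 : ℝ) ^ (3 / 2 : ℝ))) := by
    simpa only [div_mul_div_comm, one_mul] using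
      h32.mul_of_nonneg h32 (fun _ => by positivity) (fun _ => by positivity)
  refine (hprod.comp_injective Subtype.val_injective).of_nonneg_of_le (fun _ => by positivity) ?_
  rintro ⟨⟨m, k⟩, hkm, hk⟩
  have hk1 : (1 : ℝ) ≤ k := by exact_mod_cast hk
  have hkm' : (k : ℝ) ≤ m := by exact_mod_cast hkm.le
  have hk0 : (0 : ℝ) < k := by linarith
  apply one_div_le_one_div_of_le
    (mul_pos (Real.rpow_pos_of_pos (hk0.trans_le hkm') _) (Real.rpow_pos_of_pos hk0 _))
  calc (m : ℝ) ^ (3 / 2 : ℝ) * (k : ℝ) ^ (3 / 2 : ℝ) ≤ (m : ℝ) ^ 2 * k :=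
        rpow_three_halves_mul_le (by positivity) hkm'
    _ ≤ (m : ℝ) ^ a * (k : ℝ) ^ b := by
        gcongr
        · linarith
        · exact le_self_pow₀ hk1 (by omega)

lemma hasSum_zeta2 {a b : ℕ} (ha : 2 ≤ a) (hb : 1 ≤ b) :
    HasSum (fun q : Zeta2Index => 1 / ((q.1.1 : ℝ) ^ a * (q.1.2 : ℝ) ^ b)) (zeta2 a b) := by
  have h := (summable_zeta2 ha hb).hasSum
  unfold zeta2
  simp_rw [Real.rpow_natCast]
  exact h

lemma hasSum_indicator_zeta2 {a b : ℕ} (ha : 2 ≤ a) (hb : 1 ≤ b) :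
    HasSum ({p : ℕ × ℕ | p.2 < p.1}.indicator fun p => 1 / ((p.1 : ℝ) ^ a * (p.2 : ℝ) ^ b))
      (zeta2 a b) := by
  have h := (hasSum_subtype_iff_indicator (s := {q : ℕ × ℕ | q.2 < q.1 ∧ 0 < q.2})
    (f := fun p : ℕ × ℕ => 1 / ((p.1 : ℝ) ^ a * (p.2 : ℝ) ^ b))).mp (hasSum_zeta2 ha hb)
  convert h using 1
  ext ⟨m, k⟩
  rcases Nat.eq_zero_or_pos k with rfl | hk
  · simp [zero_pow (by omega : b ≠ 0)]
  · simp [Set.indicator_apply, hk]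

lemma hasSum_indicator_diag {a b : ℕ} (hab : 2 ≤ a + b) :
    HasSum ({p : ℕ × ℕ | p.1 = p.2}.indicator fun p => 1 / ((p.1 : ℝ) ^ a * (p.2 : ℝ) ^ b))
      (rzeta (a + b : ℕ)) := by
  rw [← (Function.Injective.hasSum_iff (g := fun n : ℕ => (n, n))
    (fun m n h => congrArg Prod.fst h) ?_)]
  · convert hasSum_rzeta hab using 1
    ext n
    simp [pow_add]
  · rintro ⟨m, k⟩ hp
    exact Set.indicator_of_notMem
      (show (m, k) ∉ {p : ℕ × ℕ | p.1 = p.2} from fun h => hp ⟨m, by simp_all⟩) _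

theorem rzeta_mul_rzeta {a b : ℕ} (ha : 2 ≤ a) (hb : 2 ≤ b) :
    rzeta a * rzeta b = zeta2 a b + zeta2 b a + rzeta (a + b : ℕ) := by
  set F : ℕ × ℕ → ℝ := fun p => 1 / ((p.1 : ℝ) ^ a * (p.2 : ℝ) ^ b)
  have hA := hasSum_rzeta ha
  have hB := hasSum_rzeta hb
  have hmul : HasSum F (rzeta a * rzeta b) := by
    simpa only [div_mul_div_comm, one_mul] using hA.mul hB
      (hA.summable.mul_of_nonneg hB.summable (fun _ => by positivity) (fun _ => by positivity))
  have hgt : HasSum ({p : ℕ × ℕ | p.1 < p.2}.indicator F) (zeta2 b a) := by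
    rw [← (Equiv.prodComm ℕ ℕ).hasSum_iff]
    convert hasSum_indicator_zeta2 hb (by omega : 1 ≤ a) using 1
    ext p
    simp [F, Set.indicator_apply, mul_comm]
  have hsplit : F = fun p => {p : ℕ × ℕ | p.2 < p.1}.indicator F p +
      {p : ℕ × ℕ | p.1 < p.2}.indicator F p + {p : ℕ × ℕ | p.1 = p.2}.indicator F p := by
    ext ⟨m, k⟩
    rcases lt_trichotomy k m with h | rfl | h
    · simp [h, h.ne', h.not_gt]
    · simp
    · simp [h, h.ne, h.not_gt]
  rw [hsplit] at hmul
  exact hmul.unique (((hasSum_indicator_zeta2 ha (by omega)).add hgt).add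
    (hasSum_indicator_diag (by omega)))

lemma sum_range_succ_inv_natCast (n : ℕ) : ∑ k ∈ range (n + 1), (k : ℝ)⁻¹ = harmonic n := by
  simp [sum_range_succ', harmonic]

lemma hasSum_harmonic_div_pow {N : ℕ} (hN : 2 ≤ N) :
    HasSum (fun n : ℕ => (harmonic n : ℝ) / (n : ℝ) ^ N) (zeta2 N 1 + rzeta (N + 1 : ℕ)) := by
  set F : ℕ × ℕ → ℝ := fun p => 1 / ((p.1 : ℝ) ^ N * (p.2 : ℝ) ^ 1)
  have hsplit : {p : ℕ × ℕ | p.2 ≤ p.1}.indicator F =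
      fun p => {p : ℕ × ℕ | p.2 < p.1}.indicator F p + {p : ℕ × ℕ | p.1 = p.2}.indicator F p := by
    ext ⟨m, k⟩
    rcases lt_trichotomy k m with h | rfl | h
    · simp [h, h.le, h.ne']
    · simp
    · simp [h.not_ge, h.not_gt, h.ne]
  have htotal :
      HasSum ({p : ℕ × ℕ | p.2 ≤ p.1}.indicator F) (zeta2 N 1 + rzeta (N + 1 : ℕ)) := by
    rw [hsplit]
    simpa only [Nat.cast_one] using (hasSum_indicator_zeta2 hN le_rfl).add
      (hasSum_indicator_diag (a := N) (b := 1) (by omega))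
  refine htotal.prod_fiberwise fun m => ?_
  have hfib : HasSum (fun k => {p : ℕ × ℕ | p.2 ≤ p.1}.indicator F (m, k))
      (∑ k ∈ range (m + 1), {p : ℕ × ℕ | p.2 ≤ p.1}.indicator F (m, k)) :=
    hasSum_sum_of_ne_finset_zero fun k hk =>
      Set.indicator_of_notMem (by simpa [Nat.lt_succ_iff] using hk) _
  convert hfib using 1
  rw [← sum_range_succ_inv_natCast, sum_div]
  refine sum_congr rfl fun k hk => ?_
  simp [F, Set.indicator_of_mem (show (m, k) ∈ {p : ℕ × ℕ | p.2 ≤ p.1} from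
    Nat.lt_succ_iff.mp (mem_range.mp hk)), div_eq_mul_inv, mul_comm]

lemma sum_Icc_one_div_pow_mul_pow {x y : ℝ} (hx : x ≠ 0) (hy : y ≠ 0) (hxy : x ≠ y)
    {N : ℕ} (hN : 2 ≤ N) :
    ∑ a ∈ Icc 2 N, 1 / (x ^ a * y ^ (N + 1 - a)) =
      1 / (x * (x - y) * y ^ (N - 1)) - 1 / (x ^ N * (x - y)) := by
  have hxy' : x - y ≠ 0 := sub_ne_zero.mpr hxy
  induction N, hN using Nat.le_induction with
  | base =>
    simp only [Icc_self, sum_singleton]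
    field_simp
    ring
  | succ N hN ih =>
    rw [sum_Icc_succ_top (by omega), Nat.add_sub_cancel_left, pow_one]
    have hshift : ∀ a ∈ Icc 2 N, 1 / (x ^ a * y ^ (N + 1 + 1 - a)) =
        1 / (x ^ a * y ^ (N + 1 - a)) / y := fun a ha => by
      rw [show N + 1 + 1 - a = N + 1 - a + 1 by grind, pow_succ]
      field_simp
    rw [sum_congr rfl hshift, ← sum_div, ih, show N + 1 - 1 = N - 1 + 1 by omega]
    field_simp
    ring

def Zeta2Index.reflect : Zeta2Index ≃ Zeta2Index where
  toFun q := ⟨(q.1.1, q.1.1 - q.1.2), by omega, by omega⟩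
  invFun q := ⟨(q.1.1, q.1.1 - q.1.2), by omega, by omega⟩
  left_inv := by rintro ⟨⟨m, k⟩, h⟩; ext <;> simp; omega
  right_inv := by rintro ⟨⟨m, k⟩, h⟩; ext <;> simp; omega

def Zeta2Index.equivProd : ℕ × ℕ ≃ Zeta2Index where
  toFun p := ⟨(p.1 + p.2 + 2, p.1 + 1), by omega, by omega⟩
  invFun q := (q.1.2 - 1, q.1.1 - q.1.2 - 1)
  left_inv := by rintro ⟨i, j⟩; ext <;> simp; omega
  right_inv := by rintro ⟨⟨m, k⟩, h⟩; ext <;> simp <;> omega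

lemma hasSum_zeta2_reflect {a b : ℕ} (ha : 2 ≤ a) (hb : 1 ≤ b) :
    HasSum (fun q : Zeta2Index => 1 / ((q.1.1 : ℝ) ^ a * ((q.1.1 : ℝ) - q.1.2) ^ b))
      (zeta2 a b) := by
  rw [← Zeta2Index.reflect.hasSum_iff]
  convert hasSum_zeta2 ha hb using 1
  ext ⟨⟨m, k⟩, hkm, hk⟩
  simp [Zeta2Index.reflect, Nat.cast_sub hkm.le]

lemma hasSum_one_div_add_mul_mul_pow {k : ℕ} (hk : k ≠ 0) {N : ℕ} (hN : 1 ≤ N) :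
    HasSum (fun j : ℕ => 1 / (((k : ℝ) + (j + 1)) * ((j : ℝ) + 1) * (k : ℝ) ^ (N - 1)))
      (harmonic k / (k : ℝ) ^ N) := by
  refine ((hasSum_div_mul_add_harmonic k).div_const ((k : ℝ) ^ N)).congr_fun fun j => ?_
  have hk' : (k : ℝ) ≠ 0 := by exact_mod_cast hk
  rw [show N = N - 1 + 1 by omega, pow_succ, Nat.add_sub_cancel]
  field_simp
  ring

theorem sum_zeta2_eq_rzeta {N : ℕ} (hN : 2 ≤ N) :
    ∑ a ∈ Icc 2 N, zeta2 a (N + 1 - a : ℕ) = rzeta (N + 1 : ℕ) := by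
  set S := ∑ a ∈ Icc 2 N, zeta2 a (N + 1 - a : ℕ)
  have hP : HasSum (fun q : Zeta2Index =>
      1 / ((q.1.1 : ℝ) * ((q.1.1 : ℝ) - q.1.2) * (q.1.2 : ℝ) ^ (N - 1))) (zeta2 N 1 + S) := by
    convert (hasSum_zeta2_reflect hN le_rfl).add (hasSum_sum (s := Icc 2 N) fun a ha =>
      hasSum_zeta2 (mem_Icc.mp ha).1 (by grind : 1 ≤ N + 1 - a)) using 1
    · ext ⟨⟨m, k⟩, hkm, hk⟩
      have hk' : (k : ℝ) ≠ 0 := by exact_mod_cast hk.ne'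
      simp only
      rw [sum_Icc_one_div_pow_mul_pow (by exact_mod_cast (hk.trans hkm).ne') hk'
        (by exact_mod_cast hkm.ne') hN]
      ring
    · rw [Nat.cast_one]
  -- `hP` also provides the summability needed to sum the same family over `m` first.
  have hfib : HasSum (fun i : ℕ => (harmonic (i + 1) : ℝ) / ((i + 1 : ℕ) : ℝ) ^ N)
      (zeta2 N 1 + S) := by
    refine (Zeta2Index.equivProd.hasSum_iff.mpr hP).prod_fiberwise fun i => ?_
    convert hasSum_one_div_add_mul_mul_pow i.succ_ne_zero (by omega : 1 ≤ N) using 1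
    ext j
    simp only [Zeta2Index.equivProd, Equiv.coe_fn_mk, Function.comp_apply]
    push_cast
    ring_nf
  have hH := (hasSum_nat_add_iff' 1).mpr (hasSum_harmonic_div_pow hN)
  simp only [range_one, sum_singleton, harmonic_zero, Rat.cast_zero, zero_div, sub_zero] at hH
  linarith [hfib.unique hH]

lemma sum_Icc_reflect {M : Type*} [AddCommMonoid M] (f : ℕ → M) (a b : ℕ) :
    ∑ j ∈ Icc a b, f (a + b - j) = ∑ j ∈ Icc a b, f j :=
  sum_nbij' (fun j => a + b - j) (fun j => a + b - j) (by simp; omega) (by simp; omega)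
    (by simp; omega) (by simp; omega) (fun _ _ => rfl)

theorem stmt7 (n : ℕ) (hn : 2 ≤ n) :
    zeta2 n 1 = (n : ℝ) / 2 * rzeta (n + 1) -
      1 / 2 * ∑ j ∈ Finset.Icc 2 (n - 1), rzeta j * rzeta (n + 1 - j : ℕ) := by
  have hsum := sum_zeta2_eq_rzeta hn
  have htop := sum_Icc_succ_top (show 2 ≤ n - 1 + 1 by omega) fun a => zeta2 a (n + 1 - a : ℕ)
  rw [Nat.sub_add_cancel (by omega)] at htop
  rw [htop, Nat.add_sub_cancel_left] at hsum
  have hstuffle : ∑ j ∈ Icc 2 (n - 1), rzeta j * rzeta (n + 1 - j : ℕ) =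
      ∑ j ∈ Icc 2 (n - 1),
        (zeta2 j (n + 1 - j : ℕ) + zeta2 (n + 1 - j : ℕ) j + rzeta (n + 1 : ℕ)) :=
    sum_congr rfl fun j hj => by
      rw [rzeta_mul_rzeta (mem_Icc.mp hj).1 (by grind), Nat.add_sub_cancel' (by grind)]
  have hreflect : ∑ j ∈ Icc 2 (n - 1), zeta2 (n + 1 - j : ℕ) j =
      ∑ j ∈ Icc 2 (n - 1), zeta2 j (n + 1 - j : ℕ) := by
    rw [← sum_Icc_reflect _ 2 (n - 1), show 2 + (n - 1) = n + 1 by omega]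
    exact sum_congr rfl fun j hj => by rw [Nat.sub_sub_self (by grind)]
  rw [hstuffle, sum_add_distrib, sum_add_distrib, hreflect, sum_const, Nat.card_Icc,
    nsmul_eq_mul, show n - 1 + 1 - 2 = n - 2 by omega, Nat.cast_sub hn]
  push_cast at hsum ⊢
  linarith
end

section
/- For real r > 1 and q > 2 − r, ζ(r,q) = (1/Γ(r)) ∫_0^∞ t^{r−1} Li_q(e^{−t}) / (e^t − 1) dt. -/
open scoped BigOperators

/-!
With `x = e^{-t}`, `1 / (e^t - 1) = Σ_{k ≥ 1} x^k` and `Li_q(x) = Σ_{n ≥ 1} x^n / n^q`, so the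
integrand is `t^{r-1} Σ_{m > n ≥ 1} e^{-m t} / n^q`. Termwise,
`∫_0^∞ t^{r-1} e^{-m t} dt = Γ(r) / m^r`, and the interchange of sum and integral is justified
because the resulting series of absolute values is the double zeta series itself, which converges
for `r > 1`, `r + q > 2`.
-/

open Real MeasureTheory Set

def zeta2IndexEquiv : ℕ × ℕ ≃ {q : ℕ × ℕ // q.2 < q.1 ∧ 0 < q.2} where
  toFun i := ⟨(i.1 + i.2 + 2, i.2 + 1), by omega⟩
  invFun q := (q.1.1 - q.1.2 - 1, q.1.2 - 1)
  left_inv i := by ext <;> simp; omega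
  right_inv q := by ext <;> simp <;> omega

lemma zeta2_eq_tsum_prod (a b : ℝ) :
    zeta2 a b = ∑' i : ℕ × ℕ, 1 / ((i.2 : ℝ) + 1) ^ b / ((i.1 : ℝ) + i.2 + 2) ^ a := by
  rw [zeta2, ← zeta2IndexEquiv.tsum_eq]
  congr 1 with i
  simp only [zeta2IndexEquiv, Equiv.coe_fn_mk]
  push_cast
  ring

lemma summable_nat_add_one_rpow_neg {e : ℝ} (he : 1 < e) :
    Summable fun n : ℕ => ((n : ℝ) + 1) ^ (-e) := by
  simpa using (summable_nat_add_iff 1).mpr (summable_nat_rpow.mpr (by linarith : -e < -1))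

lemma summable_zeta2_tsum_prod {a b : ℝ} (ha : 1 < a) (hab : 2 < a + b) :
    Summable fun i : ℕ × ℕ => 1 / ((i.2 : ℝ) + 1) ^ b / ((i.1 : ℝ) + i.2 + 2) ^ a := by
  -- bound `(k + j + 2) ^ (-a)` by `(k + 1) ^ (-(1 + δ)) * (j + 1) ^ (-(a - 1 - δ))`
  obtain ⟨δ, hδ, hδa, hδab⟩ : ∃ δ : ℝ, 0 < δ ∧ δ ≤ a - 1 ∧ δ < a + b - 2 :=
    ⟨min (a - 1) ((a + b - 2) / 2), lt_min (by linarith) (by linarith), min_le_left _ _,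
      (min_le_right _ _).trans_lt (by linarith)⟩
  have hdom : Summable fun i : ℕ × ℕ =>
      ((i.1 : ℝ) + 1) ^ (-(1 + δ)) * ((i.2 : ℝ) + 1) ^ (-(a + b - 1 - δ)) :=
    (summable_nat_add_one_rpow_neg (by linarith)).mul_of_nonneg
      (summable_nat_add_one_rpow_neg (by linarith)) (fun _ => by positivity)
      (fun _ => by positivity)
  refine hdom.of_nonneg_of_le (fun _ => by positivity) fun ⟨k, j⟩ => ?_
  have hk : (k : ℝ) + 1 ≤ k + j + 2 := by linarith [j.cast_nonneg (α := ℝ)]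
  have hj : (j : ℝ) + 1 ≤ k + j + 2 := by linarith [k.cast_nonneg (α := ℝ)]
  have hm : (0 : ℝ) < k + j + 2 := by positivity
  have hn : (0 : ℝ) < j + 1 := by positivity
  calc 1 / ((j : ℝ) + 1) ^ b / ((k : ℝ) + j + 2) ^ a
      = ((k : ℝ) + j + 2) ^ (-(1 + δ)) * (((k : ℝ) + j + 2) ^ (-(a - 1 - δ)) *
          ((j : ℝ) + 1) ^ (-b)) := by
        rw [← mul_assoc, ← rpow_add hm, show -(1 + δ) + -(a - 1 - δ) = -a by ring,
          rpow_neg hm.le, rpow_neg hn.le]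
        ring
    _ ≤ ((k : ℝ) + 1) ^ (-(1 + δ)) *
          (((j : ℝ) + 1) ^ (-(a - 1 - δ)) * ((j : ℝ) + 1) ^ (-b)) := by
        have hk' := rpow_le_rpow_of_nonpos (by positivity) hk (by linarith : -(1 + δ) ≤ 0)
        have hj' := rpow_le_rpow_of_nonpos hn hj (by linarith : -(a - 1 - δ) ≤ 0)
        gcongr
    _ = ((k : ℝ) + 1) ^ (-(1 + δ)) * ((j : ℝ) + 1) ^ (-(a + b - 1 - δ)) := by
        rw [← rpow_add hn]
        ring_nf

lemma summable_polyLog_series (p : ℝ) {x : ℝ} (hx : |x| < 1) :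
    Summable fun j : ℕ => x ^ (j + 1) / ((j : ℝ) + 1) ^ p := by
  set K : ℕ := ⌈-p⌉₊
  have hdom : Summable fun j : ℕ => ((j : ℝ) + 1) ^ K * |x| ^ (j + 1) := by
    have h := summable_pow_mul_geometric_of_norm_lt_one (R := ℝ) K (r := |x|) (by simpa using hx)
    simpa [add_comm] using (summable_nat_add_iff 1).mpr h
  refine hdom.of_norm_bounded fun j => ?_
  have hj : (1 : ℝ) ≤ (j : ℝ) + 1 := by linarith [j.cast_nonneg (α := ℝ)]
  have hpow : ((j : ℝ) + 1) ^ (-p) ≤ ((j : ℝ) + 1) ^ K := by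
    rw [← rpow_natCast]
    exact rpow_le_rpow_of_exponent_le hj (Nat.le_ceil _)
  have hbase : (0 : ℝ) ≤ (j : ℝ) + 1 := by positivity
  rw [norm_div, norm_pow, Real.norm_eq_abs, norm_of_nonneg (rpow_nonneg hbase p), div_eq_mul_inv,
    ← rpow_neg hbase, mul_comm]
  gcongr

lemma polyLog_mul_div_one_sub (p : ℝ) {x : ℝ} (hx : |x| < 1) :
    polyLog p x * (x / (1 - x)) =
      ∑' i : ℕ × ℕ, x ^ (i.1 + i.2 + 2) / ((i.2 : ℝ) + 1) ^ p := by
  have hgeom : ∑' k : ℕ, x ^ (k + 1) = x / (1 - x) := by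
    simp_rw [pow_succ', tsum_mul_left, tsum_geometric_of_norm_lt_one (ξ := x) hx, div_eq_mul_inv]
  have hnorm_geom : Summable fun k : ℕ => ‖x ^ (k + 1)‖ := by
    simpa [abs_pow, pow_succ'] using (summable_geometric_of_lt_one (abs_nonneg x) hx).mul_left |x|
  have hnorm_polyLog : Summable fun j : ℕ => ‖x ^ (j + 1) / ((j : ℝ) + 1) ^ p‖ := by
    refine (summable_polyLog_series p (x := |x|) (by rwa [abs_abs])).congr fun j => ?_
    rw [norm_div, norm_pow, Real.norm_eq_abs, norm_of_nonneg (rpow_nonneg (by positivity) p)]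
  rw [polyLog, ← hgeom, mul_comm, tsum_mul_tsum_of_summable_norm hnorm_geom hnorm_polyLog]
  congr 1 with i
  ring

lemma polyLog_exp_neg_div_exp_sub_one (p : ℝ) {t : ℝ} (ht : 0 < t) :
    polyLog p (exp (-t)) / (exp t - 1) =
      ∑' i : ℕ × ℕ, 1 / ((i.2 : ℝ) + 1) ^ p * exp (-(((i.1 : ℝ) + i.2 + 2) * t)) := by
  have hx : |exp (-t)| < 1 := by
    rw [abs_of_pos (exp_pos _), exp_lt_one_iff]
    linarith
  have hexp : exp (-t) / (1 - exp (-t)) = 1 / (exp t - 1) := by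
    rw [exp_neg]
    field_simp [(one_lt_exp_iff.mpr ht).ne']
  rw [div_eq_mul_one_div, ← hexp, polyLog_mul_div_one_sub p hx]
  congr 1 with i
  rw [← exp_nat_mul]
  push_cast
  ring_nf

lemma integrableOn_rpow_mul_exp_neg_mul {s b : ℝ} (hs : 0 < s) (hb : 0 < b) :
    IntegrableOn (fun t : ℝ => t ^ (s - 1) * exp (-(b * t))) (Ioi 0) := by
  simpa [rpow_one] using
    integrableOn_rpow_mul_exp_neg_mul_rpow (p := 1) (by linarith) zero_lt_one hb

lemma integral_rpow_mul_tsum_exp_neg_mul {ι : Type*} [Countable ι] {a p : ι → ℝ} {s : ℝ}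
    (hs : 0 < s) (hp : ∀ i, 0 < p i) (h_sum : Summable fun i => ‖a i‖ / p i ^ s) :
    ∫ t in Ioi 0, t ^ (s - 1) * ∑' i, a i * exp (-(p i * t)) =
      Gamma s * ∑' i, a i / p i ^ s := by
  set F : ι → ℝ → ℝ := fun i t => a i * (t ^ (s - 1) * exp (-(p i * t)))
  have hterm (c : ℝ) (i : ι) :
      ∫ t in Ioi 0, c * (t ^ (s - 1) * exp (-(p i * t))) = Gamma s * (c / p i ^ s) := by
    rw [integral_const_mul, integral_rpow_mul_exp_neg_mul_Ioi hs (hp i),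
      div_rpow zero_le_one (hp i).le, one_rpow]
    ring
  have hF_int (i : ι) : Integrable (F i) (volume.restrict (Ioi 0)) :=
    (integrableOn_rpow_mul_exp_neg_mul hs (hp i)).const_mul _
  have hF_norm (i : ι) : ∫ t in Ioi 0, ‖F i t‖ = Gamma s * (‖a i‖ / p i ^ s) := by
    rw [← hterm]
    refine setIntegral_congr_fun measurableSet_Ioi fun t (ht : 0 < t) => ?_
    rw [norm_mul, norm_of_nonneg (mul_nonneg (rpow_nonneg ht.le _) (exp_pos _).le)]
  calc ∫ t in Ioi 0, t ^ (s - 1) * ∑' i, a i * exp (-(p i * t))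
      = ∫ t in Ioi 0, ∑' i, F i t := by
        simp_rw [F, ← tsum_mul_left, mul_left_comm]
    _ = ∑' i, ∫ t in Ioi 0, F i t :=
        integral_tsum_of_summable_integral_norm hF_int
          (by simpa only [hF_norm] using h_sum.mul_left (Gamma s)) |>.symm
    _ = Gamma s * ∑' i, a i / p i ^ s := by
        simp_rw [F, hterm, tsum_mul_left]

theorem stmt11 (r q : ℝ) (hr : 1 < r) (hq : 2 - r < q) :
    zeta2 r q =
      (1 / Real.Gamma r) *
        ∫ t in Set.Ioi (0 : ℝ),
          t ^ (r - 1) * polyLog q (Real.exp (-t)) / (Real.exp t - 1) := by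
  have hsum := summable_zeta2_tsum_prod hr (by linarith : 2 < r + q)
  have hmellin : ∫ t in Ioi (0 : ℝ), t ^ (r - 1) * polyLog q (exp (-t)) / (exp t - 1) =
      Gamma r * zeta2 r q := by
    rw [zeta2_eq_tsum_prod,
      ← integral_rpow_mul_tsum_exp_neg_mul (by linarith) (fun _ => by positivity) ?_]
    · refine setIntegral_congr_fun measurableSet_Ioi fun t ht => ?_
      rw [mul_div_assoc, polyLog_exp_neg_div_exp_sub_one q ht]
    · refine hsum.congr fun i => ?_
      rw [norm_div, norm_one, norm_of_nonneg (rpow_nonneg (by positivity) _)]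
  rw [hmellin, one_div, inv_mul_cancel_left₀ (Gamma_pos_of_pos (by linarith)).ne']
end

section
/- For real k > 3/2, the sum over n ≥ 1 of (ζ(k) − Σ_{i=1}^n 1/i^k)^2 equals ζ(2k−1) − ζ(k)^2 + (2/Γ(k)) ∫_0^∞ t^{k−1} Li_{k−1}(e^{−t})/(e^t − 1) dt. -/
open scoped BigOperators

/-!
Write `a m = (m + 1)^(-k)` and `T n = Σ_{i ≥ n} a i`, so that `zetaTail k n = T n` and `T 0 = ζ(k)`.
Since `T m = a m + T (m + 1)`, telescoping gives `T n ^ 2 = Σ_{m ≥ n} a m (a m + 2 T (m + 1))`, and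
summing over `n` counts the `m`-th term `m + 1` times:
`Σ_n T n ^ 2 = ζ(2k - 1) + 2 Σ_j (j + 1)^(1 - k) T (j + 1)`.
On the other side, `Li_{k-1}(e^{-t}) / (e^t - 1) = Σ_{j,m} (j + 1)^(1 - k) e^{-(j + m + 2) t}`,
and integrating termwise against `t^(k - 1)` gives `Γ(k) Σ_{j,m} (j + 1)^(1 - k) (j + m + 2)^(-k)`,
whose inner sums over `m` are `(j + 1)^(1 - k) T (j + 1)`. The double series converges because
`(j + m + 2)^k ≥ (j + 1)^(1/2) (m + 1)^(k - 1/2)` and `k - 1/2 > 1`; this uses `k > 3/2`.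
-/

open Filter Topology MeasureTheory Set

noncomputable def seqTail (f : ℕ → ℝ) (n : ℕ) : ℝ := ∑' i, f (i + n)

section SeqTail

variable {f : ℕ → ℝ}

lemma seqTail_nonneg (hf0 : ∀ i, 0 ≤ f i) (n : ℕ) : 0 ≤ seqTail f n :=
  tsum_nonneg fun _ => hf0 _

lemma seqTail_eq_add (hf : Summable f) (n : ℕ) : seqTail f n = f n + seqTail f (n + 1) := by
  rw [seqTail, ((summable_nat_add_iff n).mpr hf).tsum_eq_zero_add, zero_add, seqTail]
  simp only [add_assoc, add_comm 1 n]

lemma tendsto_seqTail (f : ℕ → ℝ) : Tendsto (seqTail f) atTop (𝓝 0) :=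
  tendsto_sum_nat_add f

lemma mul_add_two_mul_seqTail_nonneg (hf0 : ∀ i, 0 ≤ f i) (m : ℕ) :
    0 ≤ f m * (f m + 2 * seqTail f (m + 1)) :=
  mul_nonneg (hf0 m) (by linarith [hf0 m, seqTail_nonneg hf0 (m + 1)])

lemma hasSum_seqTail_sq (hf : Summable f) (hf0 : ∀ i, 0 ≤ f i) (n : ℕ) :
    HasSum (fun i => f (i + n) * (f (i + n) + 2 * seqTail f (i + n + 1))) (seqTail f n ^ 2) := by
  rw [hasSum_iff_tendsto_nat_of_nonneg (fun i => mul_add_two_mul_seqTail_nonneg hf0 _)]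
  have hstep : ∀ i, f (i + n) * (f (i + n) + 2 * seqTail f (i + n + 1)) =
      seqTail f (i + n) ^ 2 - seqTail f (i + 1 + n) ^ 2 := fun i => by
    rw [seqTail_eq_add hf (i + n), add_right_comm]; ring
  simp only [hstep, Finset.sum_range_sub' (fun i => seqTail f (i + n) ^ 2), zero_add]
  simpa using tendsto_const_nhds.sub
    (((tendsto_seqTail f).comp (tendsto_add_atTop_nat n)).pow 2)

/-- Each `g m` occurs in exactly `m + 1` of the tails `seqTail g 0, …, seqTail g m`. -/
lemma HasSum.seqTail_of_nonneg {g : ℕ → ℝ} {S : ℝ} (hg : ∀ m, 0 ≤ g m)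
    (h : HasSum (fun m : ℕ => ((m : ℝ) + 1) * g m) S) : HasSum (seqTail g) S := by
  have hfiber : ∀ m : ℕ, HasSum (fun _ : Finset.HasAntidiagonal.antidiagonal m => g m)
      (((m : ℝ) + 1) * g m) := fun m => by
    convert hasSum_fintype (fun _ : Finset.HasAntidiagonal.antidiagonal m => g m) using 1
    simp [Finset.Nat.card_antidiagonal]
  have hsigma : HasSum (fun x : Σ m : ℕ, Finset.HasAntidiagonal.antidiagonal m => g x.1) S := by
    have hs : Summable (fun x : Σ m : ℕ, Finset.HasAntidiagonal.antidiagonal m => g x.1) :=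
      (summable_sigma_of_nonneg fun x => hg _).mpr
        ⟨fun m => (hfiber m).summable, h.summable.congr fun m => ((hfiber m).tsum_eq).symm⟩
    rw [← (hs.hasSum.sigma hfiber).unique h]
    exact hs.hasSum
  have hprod : HasSum (fun q : ℕ × ℕ => g (q.1 + q.2)) S := by
    rw [← Finset.HasAntidiagonal.sigmaAntidiagonalEquivProd.hasSum_iff]
    convert hsigma using 2 with x
    exact congrArg g (Finset.HasAntidiagonal.mem_antidiagonal.mp x.2.2)
  exact hprod.prod_fiberwise fun n => by
    simpa only [add_comm n, seqTail] using (hprod.summable.prod_factor n).hasSum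

theorem hasSum_seqTail_sq_of_hasSum (hf : Summable f) (hf0 : ∀ i, 0 ≤ f i) {S : ℝ}
    (h : HasSum (fun m : ℕ => ((m : ℝ) + 1) * (f m * (f m + 2 * seqTail f (m + 1)))) S) :
    HasSum (fun n => seqTail f n ^ 2) S := by
  convert HasSum.seqTail_of_nonneg (mul_add_two_mul_seqTail_nonneg hf0) h using 1
  funext n
  exact ((hasSum_seqTail_sq hf hf0 n).tsum_eq).symm

end SeqTail

theorem hasSum_integral_rpow_mul_of_hasSum_exp {ι : Type*} [Countable ι] {a p : ι → ℝ}
    {F : ℝ → ℝ} {s : ℝ} (hp : ∀ i, 0 < p i) (hs : 0 < s)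
    (hF : ∀ t ∈ Ioi (0 : ℝ), HasSum (fun i => a i * Real.exp (-p i * t)) (F t))
    (h_sum : Summable fun i => |a i| / p i ^ s) :
    HasSum (fun i => Real.Gamma s * a i / p i ^ s) (∫ t in Ioi (0 : ℝ), t ^ (s - 1) * F t) := by
  have h := hasSum_mellin (a := fun i => (a i : ℂ)) (F := fun t => (F t : ℂ)) (s := s)
    (fun i => Or.inr (hp i)) (by simpa using hs)
    (fun t ht => by exact_mod_cast Complex.hasSum_ofReal.mpr (hF t ht)) (by simpa using h_sum)
  rw [← Complex.hasSum_ofReal]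
  convert h using 1
  · ext i
    push_cast [← Complex.ofReal_cpow (hp i).le, Complex.Gamma_ofReal]
    rfl
  · rw [mellin, ← integral_complex_ofReal]
    refine setIntegral_congr_fun measurableSet_Ioi fun t ht => ?_
    rw [smul_eq_mul, Complex.ofReal_mul, Complex.ofReal_cpow (le_of_lt ht)]
    push_cast
    rfl

lemma summable_one_div_nat_add_one_rpow {p : ℝ} (hp : 1 < p) :
    Summable fun i : ℕ => 1 / ((i : ℝ) + 1) ^ p := by
  refine ((Real.summable_one_div_nat_add_rpow 1 p).mpr hp).congr fun i => ?_
  rw [abs_of_pos (by positivity)]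

lemma hasSum_rzeta_s13 {p : ℝ} (hp : 1 < p) :
    HasSum (fun i : ℕ => 1 / ((i : ℝ) + 1) ^ p) (rzeta p) :=
  (summable_one_div_nat_add_one_rpow hp).hasSum

lemma zetaTail_eq_seqTail {p : ℝ} (hp : 1 < p) (n : ℕ) :
    zetaTail p n = seqTail (fun i : ℕ => 1 / ((i : ℝ) + 1) ^ p) n := by
  rw [zetaTail, rzeta, ← (summable_one_div_nat_add_one_rpow hp).sum_add_tsum_nat_add n,
    add_sub_cancel_left, seqTail]

lemma mul_one_div_rpow_mul_add {x : ℝ} (hx : 0 < x) (k T : ℝ) :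
    x * (1 / x ^ k * (1 / x ^ k + 2 * T)) = 1 / x ^ (2 * k - 1) + 2 * (1 / x ^ (k - 1) * T) := by
  rw [Real.rpow_sub_one hx.ne', Real.rpow_sub_one hx.ne', show 2 * k = k + k by ring,
    Real.rpow_add hx]
  field_simp

lemma hasSum_polyLog_div_exp_sub_one {s t : ℝ} (hs : 0 ≤ s) (ht : 0 < t) :
    HasSum (fun q : ℕ × ℕ => 1 / ((q.1 : ℝ) + 1) ^ s * Real.exp (-((q.1 : ℝ) + q.2 + 2) * t))
      (polyLog s (Real.exp (-t)) / (Real.exp t - 1)) := by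
  set r := Real.exp (-t) with hr
  have hr0 : 0 ≤ r := (Real.exp_pos _).le
  have hr1 : r < 1 := Real.exp_lt_one_iff.mpr (by linarith)
  have hgeom : HasSum (fun m : ℕ => r ^ (m + 1)) (1 / (Real.exp t - 1)) := by
    have hval : 1 / (Real.exp t - 1) = r * (1 - r)⁻¹ := by
      have : 1 < Real.exp t := Real.one_lt_exp_iff.mpr ht
      rw [hr, Real.exp_neg]
      field_simp
    rw [hval]
    exact ((hasSum_geometric_of_lt_one hr0 hr1).mul_left r).congr_fun fun m => by ring
  have hpoly : Summable fun j : ℕ => r ^ (j + 1) / ((j : ℝ) + 1) ^ s :=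
    Summable.of_nonneg_of_le (fun j => by positivity)
      (fun j => div_le_self (by positivity) (Real.one_le_rpow (by linarith) hs)) hgeom.summable
  have h := hpoly.hasSum.mul hgeom
    (hpoly.mul_of_nonneg hgeom.summable (fun _ => by positivity) (fun _ => by positivity))
  rw [← polyLog, ← div_eq_mul_one_div] at h
  refine h.congr_fun fun q => ?_
  rw [one_div_mul_eq_div, div_mul_eq_mul_div, ← pow_add, hr, ← Real.exp_nat_mul]
  congr 2
  push_cast
  ring

lemma summable_one_div_rpow_div_rpow {k : ℝ} (hk : 3 / 2 < k) :
    Summable fun q : ℕ × ℕ => 1 / ((q.1 : ℝ) + 1) ^ (k - 1) / ((q.1 : ℝ) + q.2 + 2) ^ k := by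
  have hs := summable_one_div_nat_add_one_rpow (p := k - 1 / 2) (by linarith)
  refine Summable.of_nonneg_of_le (fun q => by positivity) (fun ⟨j, m⟩ => ?_)
    (hs.mul_of_nonneg hs (fun _ => by positivity) (fun _ => by positivity))
  have hj : (0 : ℝ) < j + 1 := by positivity
  have hjm : (0 : ℝ) < j + m + 2 := by positivity
  have key : ((j : ℝ) + 1) ^ (k - 1 / 2) * ((m : ℝ) + 1) ^ (k - 1 / 2) ≤
      ((j : ℝ) + 1) ^ (k - 1) * ((j : ℝ) + m + 2) ^ k := calc
    _ = ((j : ℝ) + 1) ^ (k - 1) *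
          (((j : ℝ) + 1) ^ (1 / 2 : ℝ) * ((m : ℝ) + 1) ^ (k - 1 / 2)) := by
      rw [← mul_assoc, ← Real.rpow_add hj]; ring_nf
    _ ≤ ((j : ℝ) + 1) ^ (k - 1) *
          (((j : ℝ) + m + 2) ^ (1 / 2 : ℝ) * ((j : ℝ) + m + 2) ^ (k - 1 / 2)) := by
      gcongr <;> linarith
    _ = _ := by rw [← Real.rpow_add hjm]; ring_nf
  rw [div_div, one_div_mul_one_div]
  exact one_div_le_one_div_of_le (by positivity) key

lemma hasSum_div_rpow_eq_mul_zetaTail {k : ℝ} (hk : 1 < k) (c : ℝ) (j : ℕ) :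
    HasSum (fun m : ℕ => c / ((j : ℝ) + m + 2) ^ k) (c * zetaTail k (j + 1)) := by
  rw [zetaTail_eq_seqTail hk, seqTail]
  refine (((summable_nat_add_iff (j + 1)).mpr
    (summable_one_div_nat_add_one_rpow hk)).hasSum.mul_left c).congr_fun fun m => ?_
  rw [mul_one_div]
  push_cast
  ring_nf

theorem hasSum_integral_polyLog {k : ℝ} (hk : 3 / 2 < k) :
    HasSum (fun j : ℕ => Real.Gamma k * (1 / ((j : ℝ) + 1) ^ (k - 1)) * zetaTail k (j + 1))
      (∫ t in Ioi (0 : ℝ), t ^ (k - 1) * polyLog (k - 1) (Real.exp (-t)) / (Real.exp t - 1)) := by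
  simp only [mul_div_assoc]
  exact (hasSum_integral_rpow_mul_of_hasSum_exp
    (a := fun q : ℕ × ℕ => 1 / ((q.1 : ℝ) + 1) ^ (k - 1)) (p := fun q => (q.1 : ℝ) + q.2 + 2)
    (fun q => by positivity) (by linarith)
    (fun t ht => hasSum_polyLog_div_exp_sub_one (by linarith) ht)
    ((summable_one_div_rpow_div_rpow hk).congr fun q => by rw [abs_of_nonneg (by positivity)])
    ).prod_fiberwise fun j =>
      hasSum_div_rpow_eq_mul_zetaTail (by linarith)
        (Real.Gamma k * (1 / ((j : ℝ) + 1) ^ (k - 1))) j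

theorem stmt13 (k : ℝ) (hk : 3 / 2 < k) :
    ∑' n : ℕ, zetaTail k (n + 1) ^ 2 =
      rzeta (2 * k - 1) - rzeta k ^ 2 +
        (2 / Real.Gamma k) *
          ∫ t in Set.Ioi (0 : ℝ),
            t ^ (k - 1) * polyLog (k - 1) (Real.exp (-t)) / (Real.exp t - 1) := by
  have hk1 : 1 < k := by linarith

  have hc := (hasSum_rzeta_s13 (p := 2 * k - 1) (by linarith)).add
    ((hasSum_integral_polyLog hk).mul_left (2 / Real.Gamma k))
  simp only [zetaTail_eq_seqTail hk1] at hc ⊢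
  have hsq := hasSum_seqTail_sq_of_hasSum (summable_one_div_nat_add_one_rpow hk1)
    (fun i => by positivity) (hc.congr_fun fun m => by
      rw [mul_one_div_rpow_mul_add (by positivity)]
      field_simp)
  rw [← hasSum_nat_add_iff' 1] at hsq
  have hζ : seqTail (fun i : ℕ => 1 / ((i : ℝ) + 1) ^ k) 0 = rzeta k := by
    rw [← zetaTail_eq_seqTail hk1, zetaTail, Finset.sum_range_zero, sub_zero]
  rw [hsq.tsum_eq, Finset.sum_range_one, hζ]
  ring
end

section
/- For real p, q, r > 1 with p + q + r > 4, the sum over n ≥ 1 of (ζ(p) − Σ_{i=1}^n 1/i^p)(ζ(q) − Σ_{j=1}^n 1/j^q)(ζ(r) − Σ_{k=1}^n 1/k^r) equals ζ(p,q,r−1) + ζ(p,r,q−1) + ζ(q,p,r−1) + ζ(q,r,p−1) + ζ(r,p,q−1) + ζ(r,q,p−1) + ζ(p+q,r−1) + ζ(p+r,q−1) + ζ(q+r,p−1) + ζ(p,q+r−1) + ζ(q,p+r−1) + ζ(r,p+q−1) + ζ(p+q+r−1) − ζ(p)ζ(q)ζ(r). -/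
open scoped BigOperators

/-!
Write `T_s(n) = ζ(s) − Σ_{i ≤ n} i^{-s} = Σ_{i > n} i^{-s}`. Exchanging the order of summation,
`Σ_{n ≥ 1} T_p(n) T_q(n) T_r(n) = Σ_{a,b,c ≥ 1} (min(a,b,c) − 1) a^{-p} b^{-q} c^{-r}`.
Sorting the triples `(a,b,c)` by the 13 weak orderings of their coordinates turns the part with
weight `min(a,b,c)` into the 13 multiple zeta values (the weight lowers the exponent of the smallest
index by one), and the part with weight `1` is `ζ(p)ζ(q)ζ(r)`. The computation is done in `ℝ≥0∞`,
where all rearrangements are free; to come back to `ℝ` the weighted sum must be finite, which follows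
from `min(a,b,c) ≤ a^α b^β c^γ` with `α = (p-1)/(p+q+r-3)`, `β`, `γ` alike, since `α + β + γ = 1`
and `p - α, q - β, r - γ > 1`.
-/

open scoped ENNReal

namespace MultipleZeta

noncomputable section

lemma tsum_subtype_eq_tsum_ite_comp {β γ : Type*} {g : γ → β} (hg : Function.Injective g)
    {P : β → Prop} [DecidablePred P] (hP : ∀ y, P y → y ∈ Set.range g) (G : β → ℝ) :
    ∑' y : {y // P y}, G y = ∑' x, if P (g x) then G (g x) else 0 := by
  refine (tsum_subtype {y | P y} G).trans ?_
  rw [← hg.tsum_eq (f := {y | P y}.indicator G) fun y hy =>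
    hP y (Set.support_indicator_subset hy)]
  simp only [Set.indicator_apply, Set.mem_ofPred_eq]

lemma tsum_nat_add_eq_tsum_ite {M : Type*} [AddCommMonoid M] [TopologicalSpace M]
    (F : ℕ → M) (m : ℕ) : ∑' i, F (i + m) = ∑' i, if m ≤ i then F i else 0 := by
  rw [← (add_left_injective m).tsum_eq (f := fun i => if m ≤ i then F i else 0)]
  · simp
  · intro i hi
    exact ⟨i - m, Nat.sub_add_cancel (by_contra fun h => hi (if_neg h))⟩

lemma tsum_eq_toReal_tsum_ofReal {α : Type*} {f : α → ℝ} (hf : ∀ a, 0 ≤ f a) :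
    ∑' a, f a = (∑' a, ENNReal.ofReal (f a)).toReal := by
  rw [ENNReal.tsum_toReal_eq fun _ => ENNReal.ofReal_ne_top]
  exact tsum_congr fun a => (ENNReal.toReal_ofReal (hf a)).symm

lemma tsum_mul_tsum_mul_tsum {α β γ : Type*} (f : α → ℝ≥0∞) (g : β → ℝ≥0∞) (h : γ → ℝ≥0∞) :
    (∑' a, f a) * (∑' b, g b) * (∑' c, h c) = ∑' x : α × β × γ, f x.1 * g x.2.1 * h x.2.2 := by
  simp only [ENNReal.tsum_prod', ENNReal.tsum_mul_left, ENNReal.tsum_mul_right]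

lemma tsum_ite_lt (M : ℕ) (c : ℝ≥0∞) : ∑' n : ℕ, (if n < M then c else 0) = M * c := by
  rw [tsum_eq_sum (s := Finset.range M) fun n hn => if_neg (by simpa using hn),
    Finset.sum_ite_of_true fun n hn => Finset.mem_range.mp hn]
  simp

lemma tsum_tsum_ite_lt {α : Type*} (m : α → ℕ) (F : α → ℝ≥0∞) :
    ∑' n, ∑' x, (if n < m x then F x else 0) = ∑' x, (m x : ℝ≥0∞) * F x := by
  rw [ENNReal.tsum_comm]
  exact tsum_congr fun x => tsum_ite_lt (m x) (F x)

section Diagonal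

variable {α β : Type*} [DecidableEq α]

def diagTerm (G : α × β → ℝ≥0∞) (x : α × α × β) : ℝ≥0∞ :=
  if x.1 = x.2.1 then G (x.1, x.2.2) else 0

lemma tsum_diagTerm (G : α × β → ℝ≥0∞) : ∑' x, diagTerm G x = ∑' y, G y := by
  rw [ENNReal.tsum_prod', ENNReal.tsum_prod']
  refine tsum_congr fun a => ?_
  rw [ENNReal.tsum_prod', ← tsum_ite_eq a fun b => ∑' c, G (b, c)]
  refine tsum_congr fun b => ?_
  rcases eq_or_ne b a with rfl | hb
  · simp [diagTerm]
  · simp [diagTerm, hb, Ne.symm hb]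

lemma tsum_ite_fst_eq_snd (W : α → ℝ≥0∞) :
    ∑' y : α × α, (if y.1 = y.2 then W y.1 else 0) = ∑' a, W a := by
  rw [ENNReal.tsum_prod']
  exact tsum_congr fun a => tsum_ite_eq' a fun _ => W a

end Diagonal

def orderedTerm₂ (f g : ℕ → ℝ≥0∞) (x : ℕ × ℕ) : ℝ≥0∞ :=
  if x.2 < x.1 then f x.1 * g x.2 else 0

def orderedTerm₃ (f g h : ℕ → ℝ≥0∞) (x : ℕ × ℕ × ℕ) : ℝ≥0∞ :=
  if x.2.1 < x.1 ∧ x.2.2 < x.2.1 then f x.1 * g x.2.1 * h x.2.2 else 0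

def orderedSum₂ (f g : ℕ → ℝ≥0∞) : ℝ≥0∞ := ∑' x, orderedTerm₂ f g x

def orderedSum₃ (f g h : ℕ → ℝ≥0∞) : ℝ≥0∞ := ∑' x, orderedTerm₃ f g h x

def swap₁₂ : ℕ × ℕ × ℕ ≃ ℕ × ℕ × ℕ :=
  ⟨fun x => (x.2.1, x.1, x.2.2), fun x => (x.2.1, x.1, x.2.2), fun _ => rfl, fun _ => rfl⟩

def swap₂₃ : ℕ × ℕ × ℕ ≃ ℕ × ℕ × ℕ :=
  ⟨fun x => (x.1, x.2.2, x.2.1), fun x => (x.1, x.2.2, x.2.1), fun _ => rfl, fun _ => rfl⟩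

/-- One term per weak ordering of the coordinates; the weight of the minimum goes to the factor of
the smallest index. -/
lemma weight_min_mul_eq_sum_orderedTerm (w f g h : ℕ → ℝ≥0∞) (x : ℕ × ℕ × ℕ) :
    w (min x.1 (min x.2.1 x.2.2)) * (f x.1 * g x.2.1 * h x.2.2) =
      orderedTerm₃ f g (w * h) x + orderedTerm₃ f h (w * g) (swap₂₃ x) +
      orderedTerm₃ g f (w * h) (swap₁₂ x) + orderedTerm₃ g h (w * f) (swap₁₂.trans swap₂₃ x) +
      orderedTerm₃ h f (w * g) (swap₂₃.trans swap₁₂ x) +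
      orderedTerm₃ h g (w * f) ((swap₁₂.trans swap₂₃).trans swap₁₂ x) +
      diagTerm (orderedTerm₂ (f * g) (w * h)) x +
      diagTerm (orderedTerm₂ (f * h) (w * g)) (swap₂₃ x) +
      diagTerm (orderedTerm₂ (g * h) (w * f)) (swap₁₂.trans swap₂₃ x) +
      diagTerm (orderedTerm₂ f (w * (g * h)) ∘ Equiv.prodComm ℕ ℕ) (swap₁₂.trans swap₂₃ x) +
      diagTerm (orderedTerm₂ g (w * (f * h)) ∘ Equiv.prodComm ℕ ℕ) (swap₂₃ x) +
      diagTerm (orderedTerm₂ h (w * (f * g)) ∘ Equiv.prodComm ℕ ℕ) x +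
      diagTerm (fun y => if y.1 = y.2 then (w * (f * g * h)) y.1 else 0) x := by
  obtain ⟨a, b, c⟩ := x
  dsimp only [orderedTerm₂, orderedTerm₃, diagTerm, swap₁₂, swap₂₃, Equiv.trans_apply,
    Equiv.coe_fn_mk, Equiv.prodComm_apply, Function.comp_apply, Prod.swap_prod_mk]
  rcases lt_trichotomy a b with hab | hab | hab <;>
  rcases lt_trichotomy b c with hbc | hbc | hbc <;>
  rcases lt_trichotomy a c with hac | hac | hac <;>
  first
  | omega
  | (simp (disch := omega) only [if_pos, if_neg, min_eq_left, min_eq_right, Pi.mul_apply,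
      add_zero, zero_add]; subst_vars; ring)

theorem tsum_weight_min_mul_eq (w f g h : ℕ → ℝ≥0∞) :
    ∑' x : ℕ × ℕ × ℕ, w (min x.1 (min x.2.1 x.2.2)) * (f x.1 * g x.2.1 * h x.2.2) =
      orderedSum₃ f g (w * h) + orderedSum₃ f h (w * g) + orderedSum₃ g f (w * h) +
      orderedSum₃ g h (w * f) + orderedSum₃ h f (w * g) + orderedSum₃ h g (w * f) +
      orderedSum₂ (f * g) (w * h) + orderedSum₂ (f * h) (w * g) + orderedSum₂ (g * h) (w * f) +
      orderedSum₂ f (w * (g * h)) + orderedSum₂ g (w * (f * h)) + orderedSum₂ h (w * (f * g)) +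
      ∑' n, (w * (f * g * h)) n := by
  simp only [weight_min_mul_eq_sum_orderedTerm, ENNReal.tsum_add, Equiv.tsum_eq, tsum_diagTerm,
    Function.comp_apply, tsum_ite_fst_eq_snd]
  rfl

/-- The index `n` stands for the integer `n + 1`, so below a weight `min x` on indices is
`min − 1` on the integers. -/
def zetaTerm (s : ℝ) (n : ℕ) : ℝ≥0∞ := ENNReal.ofReal (1 / ((n : ℝ) + 1) ^ s)

lemma zetaTerm_mul_zetaTerm (s t : ℝ) : zetaTerm s * zetaTerm t = zetaTerm (s + t) := by
  funext n
  simp only [Pi.mul_apply, zetaTerm]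
  rw [← ENNReal.ofReal_mul (by positivity), Real.rpow_add (by positivity), one_div_mul_one_div]

lemma succ_mul_zetaTerm (s : ℝ) :
    (fun n : ℕ => (n : ℝ≥0∞) + 1) * zetaTerm s = zetaTerm (s - 1) := by
  funext n
  have hn : (0 : ℝ) < n + 1 := by positivity
  simp only [Pi.mul_apply, zetaTerm]
  rw [show (n : ℝ≥0∞) + 1 = ENNReal.ofReal ((n : ℝ) + 1) by norm_cast,
    ← ENNReal.ofReal_mul hn.le, Real.rpow_sub hn, Real.rpow_one]
  field_simp

lemma ofReal_rpow_mul_zetaTerm (s a : ℝ) (n : ℕ) :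
    ENNReal.ofReal (((n : ℝ) + 1) ^ a) * zetaTerm s n = zetaTerm (s - a) n := by
  have hn : (0 : ℝ) < n + 1 := by positivity
  rw [zetaTerm, zetaTerm, ← ENNReal.ofReal_mul (by positivity), Real.rpow_sub hn]
  field_simp

lemma summable_one_div_succ_rpow {s : ℝ} (hs : 1 < s) :
    Summable fun n : ℕ => 1 / ((n : ℝ) + 1) ^ s := by
  simpa using (summable_nat_add_iff 1).mpr (Real.summable_one_div_nat_rpow.mpr hs)

lemma tsum_zetaTerm_ne_top {s : ℝ} (hs : 1 < s) : ∑' n, zetaTerm s n ≠ ⊤ := by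
  simp only [zetaTerm]
  rw [← ENNReal.ofReal_tsum_of_nonneg (fun n => by positivity) (summable_one_div_succ_rpow hs)]
  exact ENNReal.ofReal_ne_top

lemma rzeta_eq_toReal (s : ℝ) : rzeta s = (∑' n, zetaTerm s n).toReal :=
  tsum_eq_toReal_tsum_ofReal fun _ => by positivity

lemma zeta2_eq_toReal (a b : ℝ) :
    zeta2 a b = (orderedSum₂ (zetaTerm a) (zetaTerm b)).toReal := by
  have hshift : Function.Injective fun x : ℕ × ℕ => (x.1 + 1, x.2 + 1) := by
    intro x y h
    simp only [Prod.ext_iff] at h ⊢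
    omega
  refine (tsum_subtype_eq_tsum_ite_comp hshift
    (fun y hy => ⟨(y.1 - 1, y.2 - 1), by simp only [Prod.ext_iff]; omega⟩)
    fun q => 1 / ((q.1 : ℝ) ^ a * (q.2 : ℝ) ^ b)).trans ?_
  rw [orderedSum₂, ENNReal.tsum_toReal_eq fun x => by
    unfold orderedTerm₂; split_ifs <;> simp [zetaTerm, ENNReal.mul_eq_top]]
  refine tsum_congr fun x => ?_
  simp only [orderedTerm₂, zetaTerm, add_lt_add_iff_right, Nat.zero_lt_succ, and_true]
  split_ifs
  · rw [← ENNReal.ofReal_mul (by positivity), ENNReal.toReal_ofReal (by positivity)]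
    push_cast
    ring
  · rfl

lemma zeta3_eq_toReal (a b c : ℝ) :
    zeta3 a b c = (orderedSum₃ (zetaTerm a) (zetaTerm b) (zetaTerm c)).toReal := by
  have hshift : Function.Injective fun x : ℕ × ℕ × ℕ => (x.1 + 1, x.2.1 + 1, x.2.2 + 1) := by
    intro x y h
    simp only [Prod.ext_iff] at h ⊢
    omega
  refine (tsum_subtype_eq_tsum_ite_comp hshift
    (fun y hy => ⟨(y.1 - 1, y.2.1 - 1, y.2.2 - 1), by simp only [Prod.ext_iff]; omega⟩)
    fun t => 1 / ((t.1 : ℝ) ^ a * (t.2.1 : ℝ) ^ b * (t.2.2 : ℝ) ^ c)).trans ?_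
  rw [orderedSum₃, ENNReal.tsum_toReal_eq fun x => by
    unfold orderedTerm₃; split_ifs <;> simp [zetaTerm, ENNReal.mul_eq_top]]
  refine tsum_congr fun x => ?_
  simp only [orderedTerm₃, zetaTerm, add_lt_add_iff_right, Nat.zero_lt_succ, and_true]
  split_ifs
  · rw [← ENNReal.ofReal_mul (by positivity), ← ENNReal.ofReal_mul (by positivity),
      ENNReal.toReal_ofReal (by positivity)]
    push_cast
    ring
  · rfl

lemma zetaTail_eq_tsum {s : ℝ} (hs : 1 < s) (m : ℕ) :
    zetaTail s m = ∑' i, 1 / (((i + m : ℕ) : ℝ) + 1) ^ s := by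
  rw [zetaTail, rzeta, ← (summable_one_div_succ_rpow hs).sum_add_tsum_nat_add m,
    add_sub_cancel_left]

lemma zetaTail_nonneg {s : ℝ} (hs : 1 < s) (m : ℕ) : 0 ≤ zetaTail s m := by
  rw [zetaTail_eq_tsum hs]
  exact tsum_nonneg fun _ => by positivity

lemma ofReal_zetaTail {s : ℝ} (hs : 1 < s) (m : ℕ) :
    ENNReal.ofReal (zetaTail s m) = ∑' i, if m ≤ i then zetaTerm s i else 0 := by
  rw [zetaTail_eq_tsum hs, ENNReal.ofReal_tsum_of_nonneg (fun _ => by positivity)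
    ((summable_nat_add_iff m).mpr (summable_one_div_succ_rpow hs))]
  exact tsum_nat_add_eq_tsum_ite (zetaTerm s) m

lemma tsum_ofReal_zetaTail_mul {p q r : ℝ} (hp : 1 < p) (hq : 1 < q) (hr : 1 < r) :
    ∑' n : ℕ, ENNReal.ofReal (zetaTail p (n + 1) * zetaTail q (n + 1) * zetaTail r (n + 1)) =
      ∑' x : ℕ × ℕ × ℕ, ((min x.1 (min x.2.1 x.2.2) : ℕ) : ℝ≥0∞) *
        (zetaTerm p x.1 * zetaTerm q x.2.1 * zetaTerm r x.2.2) := by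
  rw [← tsum_tsum_ite_lt]
  refine tsum_congr fun n => ?_
  rw [ENNReal.ofReal_mul (mul_nonneg (zetaTail_nonneg hp _) (zetaTail_nonneg hq _)),
    ENNReal.ofReal_mul (zetaTail_nonneg hp _), ofReal_zetaTail hp, ofReal_zetaTail hq,
    ofReal_zetaTail hr, tsum_mul_tsum_mul_tsum]
  refine tsum_congr fun x => ?_
  simp only [lt_min_iff, Nat.add_one_le_iff]
  split_ifs <;> simp_all

theorem tsum_ofReal_zetaTail_mul_add {p q r : ℝ} (hp : 1 < p) (hq : 1 < q) (hr : 1 < r) :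
    ∑' n : ℕ, ENNReal.ofReal (zetaTail p (n + 1) * zetaTail q (n + 1) * zetaTail r (n + 1)) +
        (∑' n, zetaTerm p n) * (∑' n, zetaTerm q n) * (∑' n, zetaTerm r n) =
      ∑' x : ℕ × ℕ × ℕ, (((min x.1 (min x.2.1 x.2.2) : ℕ) : ℝ≥0∞) + 1) *
        (zetaTerm p x.1 * zetaTerm q x.2.1 * zetaTerm r x.2.2) := by
  rw [tsum_ofReal_zetaTail_mul hp hq hr, tsum_mul_tsum_mul_tsum, ← ENNReal.tsum_add]
  exact tsum_congr fun x => (add_one_mul _ _).symm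

theorem tsum_succ_min_mul_zetaTerm (p q r : ℝ) :
    ∑' x : ℕ × ℕ × ℕ, (((min x.1 (min x.2.1 x.2.2) : ℕ) : ℝ≥0∞) + 1) *
        (zetaTerm p x.1 * zetaTerm q x.2.1 * zetaTerm r x.2.2) =
      orderedSum₃ (zetaTerm p) (zetaTerm q) (zetaTerm (r - 1)) +
      orderedSum₃ (zetaTerm p) (zetaTerm r) (zetaTerm (q - 1)) +
      orderedSum₃ (zetaTerm q) (zetaTerm p) (zetaTerm (r - 1)) +
      orderedSum₃ (zetaTerm q) (zetaTerm r) (zetaTerm (p - 1)) +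
      orderedSum₃ (zetaTerm r) (zetaTerm p) (zetaTerm (q - 1)) +
      orderedSum₃ (zetaTerm r) (zetaTerm q) (zetaTerm (p - 1)) +
      orderedSum₂ (zetaTerm (p + q)) (zetaTerm (r - 1)) +
      orderedSum₂ (zetaTerm (p + r)) (zetaTerm (q - 1)) +
      orderedSum₂ (zetaTerm (q + r)) (zetaTerm (p - 1)) +
      orderedSum₂ (zetaTerm p) (zetaTerm (q + r - 1)) +
      orderedSum₂ (zetaTerm q) (zetaTerm (p + r - 1)) +
      orderedSum₂ (zetaTerm r) (zetaTerm (p + q - 1)) +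
      ∑' n, zetaTerm (p + q + r - 1) n := by
  simpa only [zetaTerm_mul_zetaTerm, succ_mul_zetaTerm] using
    tsum_weight_min_mul_eq (fun n => (n : ℝ≥0∞) + 1) (zetaTerm p) (zetaTerm q) (zetaTerm r)

lemma succ_min_le_rpow_mul {α β γ : ℝ} (h : α + β + γ = 1) (hα : 0 ≤ α) (hβ : 0 ≤ β)
    (hγ : 0 ≤ γ) (a b c : ℕ) :
    ((min a (min b c) : ℕ) : ℝ) + 1 ≤
      ((a : ℝ) + 1) ^ α * ((b : ℝ) + 1) ^ β * ((c : ℝ) + 1) ^ γ := by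
  set m : ℝ := ((min a (min b c) : ℕ) : ℝ) + 1
  have hm : 0 < m := by positivity
  calc m = m ^ α * m ^ β * m ^ γ := by
        rw [← Real.rpow_add hm, ← Real.rpow_add hm, h, Real.rpow_one]
    _ ≤ _ := by
        gcongr <;> simp only [m, add_le_add_iff_right, Nat.cast_le] <;> omega

lemma succ_min_mul_zetaTerm_le {α β γ : ℝ} (h : α + β + γ = 1) (hα : 0 ≤ α) (hβ : 0 ≤ β)
    (hγ : 0 ≤ γ) (p q r : ℝ) (x : ℕ × ℕ × ℕ) :
    (((min x.1 (min x.2.1 x.2.2) : ℕ) : ℝ≥0∞) + 1) *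
        (zetaTerm p x.1 * zetaTerm q x.2.1 * zetaTerm r x.2.2) ≤
      zetaTerm (p - α) x.1 * zetaTerm (q - β) x.2.1 * zetaTerm (r - γ) x.2.2 := by
  have hmin := succ_min_le_rpow_mul h hα hβ hγ x.1 x.2.1 x.2.2
  rw [← ofReal_rpow_mul_zetaTerm, ← ofReal_rpow_mul_zetaTerm, ← ofReal_rpow_mul_zetaTerm]
  calc _ ≤ ENNReal.ofReal (((x.1 : ℝ) + 1) ^ α * ((x.2.1 : ℝ) + 1) ^ β * ((x.2.2 : ℝ) + 1) ^ γ) *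
        (zetaTerm p x.1 * zetaTerm q x.2.1 * zetaTerm r x.2.2) := by
        gcongr
        rw [show (((min x.1 (min x.2.1 x.2.2) : ℕ) : ℝ≥0∞) + 1) =
          ENNReal.ofReal (((min x.1 (min x.2.1 x.2.2) : ℕ) : ℝ) + 1) by norm_cast]
        exact ENNReal.ofReal_le_ofReal hmin
    _ = _ := by
        rw [ENNReal.ofReal_mul (by positivity), ENNReal.ofReal_mul (by positivity)]
        ring

theorem tsum_succ_min_mul_zetaTerm_ne_top {p q r : ℝ} (hp : 1 < p) (hq : 1 < q) (hr : 1 < r)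
    (hpqr : 4 < p + q + r) :
    ∑' x : ℕ × ℕ × ℕ, (((min x.1 (min x.2.1 x.2.2) : ℕ) : ℝ≥0∞) + 1) *
        (zetaTerm p x.1 * zetaTerm q x.2.1 * zetaTerm r x.2.2) ≠ ⊤ := by
  set s := p + q + r - 3
  have hs : 1 < s := by linarith
  have hweights : (p - 1) / s + (q - 1) / s + (r - 1) / s = 1 := by
    field_simp
    ring
  have hweight_nonneg {t : ℝ} (ht : 1 < t) : 0 ≤ (t - 1) / s := by
    apply div_nonneg <;> linarith
  have hexponent {t : ℝ} (ht : 1 < t) : 1 < t - (t - 1) / s := by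
    linarith [div_lt_self (sub_pos.mpr ht) hs]
  refine ne_top_of_le_ne_top ?_ (ENNReal.tsum_le_tsum (succ_min_mul_zetaTerm_le hweights
    (hweight_nonneg hp) (hweight_nonneg hq) (hweight_nonneg hr) p q r))
  rw [← tsum_mul_tsum_mul_tsum]
  exact ENNReal.mul_ne_top (ENNReal.mul_ne_top (tsum_zetaTerm_ne_top (hexponent hp))
    (tsum_zetaTerm_ne_top (hexponent hq))) (tsum_zetaTerm_ne_top (hexponent hr))

end

end MultipleZeta

open MultipleZeta

theorem stmt14 (p q r : ℝ) (hp : 1 < p) (hq : 1 < q) (hr : 1 < r)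
    (hsum : 4 < p + q + r) :
    ∑' n : ℕ, zetaTail p (n + 1) * zetaTail q (n + 1) * zetaTail r (n + 1) =
      zeta3 p q (r - 1) + zeta3 p r (q - 1) + zeta3 q p (r - 1) + zeta3 q r (p - 1) +
        zeta3 r p (q - 1) + zeta3 r q (p - 1) +
        zeta2 (p + q) (r - 1) + zeta2 (p + r) (q - 1) + zeta2 (q + r) (p - 1) +
        zeta2 p (q + r - 1) + zeta2 q (p + r - 1) + zeta2 r (p + q - 1) +
        rzeta (p + q + r - 1) - rzeta p * rzeta q * rzeta r := by
  have key := tsum_ofReal_zetaTail_mul_add hp hq hr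
  have hfin := tsum_succ_min_mul_zetaTerm_ne_top hp hq hr hsum
  obtain ⟨hL, hZ⟩ := ENNReal.add_ne_top.mp (key ▸ hfin)
  rw [tsum_succ_min_mul_zetaTerm] at key hfin
  have hreal := congrArg ENNReal.toReal key
  simp only [ne_eq, ENNReal.add_eq_top, not_or] at hfin
  simp only [ENNReal.toReal_add hL hZ, ENNReal.toReal_add, ENNReal.toReal_mul, ne_eq,
    ENNReal.add_eq_top, not_or, hfin, not_false_eq_true, and_self] at hreal
  rw [tsum_eq_toReal_tsum_ofReal fun n => mul_nonneg (mul_nonneg (zetaTail_nonneg hp _)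
    (zetaTail_nonneg hq _)) (zetaTail_nonneg hr _)]
  simp only [zeta3_eq_toReal, zeta2_eq_toReal, rzeta_eq_toReal]
  linarith
end
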